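/- arXiv:2308.14506 — 5 statements merged into one kernel-verified Lean document; each statement's English description precedes it below -/
import Mathlib

section
/- For every x = (x₀,x₁) ∈ D(𝒜) one has ⟨𝒜x, x⟩_X ≤ μ₀ |x|²_X. Consequently, for every μ ≥ μ₀ the operator 𝒜 − μI is dissipative, i.e. ⟨𝒜x − μx, x⟩_X ≤ 0 for all x ∈ D(𝒜). -/
open MeasureTheory Set RealInnerProductSpace

/-! The domain condition makes `x₁` the primitive of `g` vanishing at `-d`, so
`∫ ⟪g, x₁⟫ = ½ |x₁ 0|²`: the kernel `⟪g t, g s⟫` integrates to `|x₁ 0|²` over the square, and the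
two triangles `s ≤ t` and `t ≤ s` contribute equally by Fubini (the diagonal is null). This term
absorbs the boundary term, `⟪x₁ 0, x₀⟫ ≤ ½ |x₁ 0|² + ½ |x₀|²`, while Cauchy–Schwarz in `L²` gives
`∫ ⟪a₁ x₀, x₁⟫ ≤ |x₀| ‖a₁‖ ‖x₁‖ ≤ ½ |x₀|² + ½ ‖a₁‖² ‖x₁‖²`. -/

namespace MeasureTheory

variable {α : Type*} [MeasurableSpace α] {μ : Measure α}

theorem MemLp.integrable_norm_mul_norm {E F : Type*} [NormedAddCommGroup E] [NormedAddCommGroup F]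
    {f : α → E} {g : α → F} (hf : MemLp f 2 μ) (hg : MemLp g 2 μ) :
    Integrable (fun a => ‖f a‖ * ‖g a‖) μ :=
  hf.norm.integrable_mul hg.norm

theorem integral_norm_mul_norm_le_sqrt_mul_sqrt {E F : Type*} [NormedAddCommGroup E]
    [NormedAddCommGroup F] {f : α → E} {g : α → F} (hf : MemLp f 2 μ) (hg : MemLp g 2 μ) :
    ∫ a, ‖f a‖ * ‖g a‖ ∂μ ≤ √(∫ a, ‖f a‖ ^ 2 ∂μ) * √(∫ a, ‖g a‖ ^ 2 ∂μ) := by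
  have h := integral_mul_norm_le_Lp_mul_Lq (μ := μ) Real.HolderConjugate.two_two
    (f := fun a => ‖f a‖) (g := fun a => ‖g a‖) (by simpa using hf.norm) (by simpa using hg.norm)
  simp only [norm_norm, Real.rpow_two] at h
  simpa only [Real.sqrt_eq_rpow, one_div] using h

variable {E : Type*} [NormedAddCommGroup E] [InnerProductSpace ℝ E]

theorem MemLp.integrable_inner {f g : α → E} (hf : MemLp f 2 μ) (hg : MemLp g 2 μ) :
    Integrable (fun a => ⟪f a, g a⟫) μ :=
  (hf.integrable_norm_mul_norm hg).mono' (hf.1.inner hg.1)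
    (ae_of_all _ fun _ => norm_inner_le_norm _ _)

theorem MemLp.apply_continuousLinearMap {F : Type*} [NormedAddCommGroup F] [NormedSpace ℝ F]
    {p : ENNReal} {φ : α → F →L[ℝ] E} (hφ : MemLp φ p μ) (v : F) :
    MemLp (fun a => φ a v) p μ :=
  (hφ.norm.mul_const ‖v‖).of_le (hφ.1.apply_continuousLinearMap v)
    (ae_of_all _ fun a => by simpa using (φ a).le_opNorm v)

theorem integral_inner_apply_le {F : Type*} [NormedAddCommGroup F] [NormedSpace ℝ F]
    {φ : α → F →L[ℝ] E} {h : α → E} (hφ : MemLp φ 2 μ) (hh : MemLp h 2 μ) (v : F) :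
    ∫ a, ⟪φ a v, h a⟫ ∂μ ≤ ‖v‖ * (√(∫ a, ‖φ a‖ ^ 2 ∂μ) * √(∫ a, ‖h a‖ ^ 2 ∂μ)) := by
  have hpt : ∀ a, ⟪φ a v, h a⟫ ≤ ‖v‖ * (‖φ a‖ * ‖h a‖) := fun a => by
    calc ⟪φ a v, h a⟫ ≤ ‖φ a v‖ * ‖h a‖ := real_inner_le_norm _ _
      _ ≤ ‖φ a‖ * ‖v‖ * ‖h a‖ := by gcongr; exact (φ a).le_opNorm v
      _ = ‖v‖ * (‖φ a‖ * ‖h a‖) := by ring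
  calc ∫ a, ⟪φ a v, h a⟫ ∂μ ≤ ∫ a, ‖v‖ * (‖φ a‖ * ‖h a‖) ∂μ :=
        integral_mono ((hφ.apply_continuousLinearMap v).integrable_inner hh)
          ((hφ.integrable_norm_mul_norm hh).const_mul _) hpt
    _ = ‖v‖ * ∫ a, ‖φ a‖ * ‖h a‖ ∂μ := integral_const_mul _ _
    _ ≤ _ := by gcongr; exact integral_norm_mul_norm_le_sqrt_mul_sqrt hφ hh

theorem integral_inner_sub_smul_self {h k : α → E} (hh : MemLp h 2 μ) (hk : MemLp k 2 μ)
    (c : ℝ) :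
    ∫ a, ⟪h a - c • k a, k a⟫ ∂μ = ∫ a, ⟪h a, k a⟫ ∂μ - c * ∫ a, ‖k a‖ ^ 2 ∂μ := by
  simp_rw [inner_sub_left, real_inner_smul_left, real_inner_self_eq_norm_sq]
  rw [integral_sub (hh.integrable_inner hk) ((hk.norm.integrable_sq).const_mul c),
    integral_const_mul]

end MeasureTheory

namespace MeasureTheory

variable {E : Type*} [NormedAddCommGroup E] [InnerProductSpace ℝ E] {μ : Measure ℝ} {f : ℝ → E}

theorem Integrable.indicator_inner_prod (hf : Integrable f μ) {R : Set (ℝ × ℝ)}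
    (hR : MeasurableSet R) :
    Integrable (R.indicator fun p => ⟪f p.1, f p.2⟫) (μ.prod μ) :=
  ((hf.norm.mul_prod hf.norm).mono' ((hf.1.comp_fst).inner hf.1.comp_snd)
    (ae_of_all _ fun _ => norm_inner_le_norm _ _)).indicator hR

theorem integral_indicator_inner_prod_mk [CompleteSpace E] (hf : Integrable f μ)
    {R : Set (ℝ × ℝ)} (hR : MeasurableSet R) (t : ℝ) :
    ∫ s, R.indicator (fun p => ⟪f p.1, f p.2⟫) (t, s) ∂μ
      = ⟪f t, ∫ s in Prod.mk t ⁻¹' R, f s ∂μ⟫ := by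
  rw [← integral_inner hf.integrableOn, ← integral_indicator (measurable_prodMk_left hR)]
  rfl

variable [CompleteSpace E] [SFinite μ]

theorem Integrable.inner_setIntegral_prod_mk (hf : Integrable f μ) {R : Set (ℝ × ℝ)}
    (hR : MeasurableSet R) :
    Integrable (fun t => ⟪f t, ∫ s in Prod.mk t ⁻¹' R, f s ∂μ⟫) μ :=
  (hf.indicator_inner_prod hR).integral_prod_left.congr
    (ae_of_all _ (integral_indicator_inner_prod_mk hf hR))

theorem integral_inner_setIntegral_Ici_eq_Iic (hf : Integrable f μ) :
    ∫ t, ⟪f t, ∫ s in Ici t, f s ∂μ⟫ ∂μ = ∫ t, ⟪f t, ∫ s in Iic t, f s ∂μ⟫ ∂μ := by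
  have hle : MeasurableSet {p : ℝ × ℝ | p.1 ≤ p.2} :=
    measurableSet_le measurable_fst measurable_snd
  have hge : MeasurableSet {p : ℝ × ℝ | p.2 ≤ p.1} :=
    measurableSet_le measurable_snd measurable_fst
  have hflip : ∀ t s, {p : ℝ × ℝ | p.1 ≤ p.2}.indicator (fun p => ⟪f p.1, f p.2⟫) (t, s)
      = {p : ℝ × ℝ | p.2 ≤ p.1}.indicator (fun p => ⟪f p.1, f p.2⟫) (s, t) := by
    intro t s
    by_cases h : t ≤ s <;> simp [h, real_inner_comm]
  calc ∫ t, ⟪f t, ∫ s in Ici t, f s ∂μ⟫ ∂μ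
      = ∫ t, ∫ s, {p : ℝ × ℝ | p.1 ≤ p.2}.indicator (fun p => ⟪f p.1, f p.2⟫) (t, s) ∂μ ∂μ :=
        integral_congr_ae (ae_of_all _ fun t => (integral_indicator_inner_prod_mk hf hle t).symm)
    _ = ∫ s, ∫ t, {p : ℝ × ℝ | p.2 ≤ p.1}.indicator (fun p => ⟪f p.1, f p.2⟫) (s, t) ∂μ ∂μ := by
        simp_rw [← hflip]; exact integral_integral_swap (hf.indicator_inner_prod hle)
    _ = ∫ t, ⟪f t, ∫ s in Iic t, f s ∂μ⟫ ∂μ :=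
        integral_congr_ae (ae_of_all _ (integral_indicator_inner_prod_mk hf hge))

theorem integral_inner_setIntegral_Iic_eq_half_norm_sq [NullSingletonClass μ]
    (hf : Integrable f μ) :
    ∫ t, ⟪f t, ∫ s in Iic t, f s ∂μ⟫ ∂μ = (1 / 2) * ‖∫ s, f s ∂μ‖ ^ 2 := by
  have hsplit : ∀ t, (∫ s in Iic t, f s ∂μ) + ∫ s in Ici t, f s ∂μ = ∫ s, f s ∂μ := fun t => by
    rw [← setIntegral_congr_set Ioi_ae_eq_Ici, ← compl_Iic]
    exact integral_add_compl measurableSet_Iic hf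
  have hsum : ∫ t, ⟪f t, ∫ s in Iic t, f s ∂μ⟫ ∂μ + ∫ t, ⟪f t, ∫ s in Ici t, f s ∂μ⟫ ∂μ
      = ‖∫ s, f s ∂μ‖ ^ 2 := by
    have hIic : Integrable (fun t => ⟪f t, ∫ s in Iic t, f s ∂μ⟫) μ :=
      hf.inner_setIntegral_prod_mk (measurableSet_le measurable_snd measurable_fst)
    have hIci : Integrable (fun t => ⟪f t, ∫ s in Ici t, f s ∂μ⟫) μ :=
      hf.inner_setIntegral_prod_mk (measurableSet_le measurable_fst measurable_snd)
    rw [← integral_add hIic hIci]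
    simp_rw [← inner_add_right, hsplit, real_inner_comm (∫ s, f s ∂μ)]
    rw [integral_inner hf, real_inner_self_eq_norm_sq]
  rw [integral_inner_setIntegral_Ici_eq_Iic hf] at hsum
  linarith

end MeasureTheory

namespace intervalIntegral

variable {E : Type*} [NormedAddCommGroup E]

theorem memLp_primitive [NormedSpace ℝ E] {μ : Measure ℝ} [NullSingletonClass μ]
    [IsFiniteMeasureOnCompacts μ] {g : ℝ → E} {a b : ℝ} (hg : IntegrableOn g (uIcc a b) μ)
    (p : ENNReal) :
    MemLp (fun ξ => ∫ ζ in a..ξ, g ζ ∂μ) p (μ.restrict (uIcc a b)) := by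
  have : IsFiniteMeasure (μ.restrict (uIcc a b)) :=
    isFiniteMeasure_restrict.2 isCompact_uIcc.measure_lt_top.ne
  have hcont := continuousOn_primitive_interval hg
  obtain ⟨C, hC⟩ := isCompact_uIcc.exists_bound_of_continuousOn hcont
  exact .of_bound (hcont.aestronglyMeasurable measurableSet_uIcc) C
    ((ae_restrict_iff' measurableSet_uIcc).2 (ae_of_all _ hC))

variable [InnerProductSpace ℝ E] [CompleteSpace E]

theorem integral_inner_primitive {g : ℝ → E} {a b : ℝ} (hab : a ≤ b)
    (hg : IntervalIntegrable g volume a b) :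
    ∫ ξ in a..b, ⟪g ξ, ∫ ζ in a..ξ, g ζ⟫ = (1 / 2) * ‖∫ ζ in a..b, g ζ‖ ^ 2 := by
  have hprim : ∀ ξ ∈ Ioc a b,
      ∫ ζ in Iic ξ, g ζ ∂volume.restrict (Ioc a b) = ∫ ζ in a..ξ, g ζ := fun ξ hξ => by
    rw [Measure.restrict_restrict measurableSet_Iic, Iic_inter_Ioc_of_le hξ.2,
      integral_of_le hξ.1.le]
  rw [integral_of_le hab, integral_of_le hab,
    ← integral_inner_setIntegral_Iic_eq_half_norm_sq hg.1]
  exact setIntegral_congr_fun measurableSet_Ioc fun ξ hξ => by rw [hprim ξ hξ]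

end intervalIntegral

section DelayOperator

variable {E : Type*} [NormedAddCommGroup E] [InnerProductSpace ℝ E] {a b : ℝ} {x₁ g : ℝ → E}
  {A₁ : ℝ → E →L[ℝ] E}

theorem memLp_of_eqOn_primitive (hab : a ≤ b) (hg : IntegrableOn g (Icc a b))
    (hx₁ : EqOn x₁ (fun ξ => ∫ ζ in a..ξ, g ζ) (Icc a b)) (p : ENNReal) :
    MemLp x₁ p (volume.restrict (Icc a b)) := by
  rw [← uIcc_of_le hab] at hg hx₁ ⊢
  exact (intervalIntegral.memLp_primitive hg p).ae_eq
    ((ae_restrict_iff' measurableSet_uIcc).2 (ae_of_all _ fun _ hξ => (hx₁ hξ).symm))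

theorem inner_delayOperator_sub_smul_eq (hab : a ≤ b) (A₀ : E →L[ℝ] E)
    (hA₁ : MemLp A₁ 2 (volume.restrict (Icc a b))) (x₀ : E)
    (hg : MemLp g 2 (volume.restrict (Icc a b)))
    (hx₁ : EqOn x₁ (fun ξ => ∫ ζ in a..ξ, g ζ) (Icc a b)) (μ : ℝ) :
    ⟪A₀ x₀ + x₁ b - μ • x₀, x₀⟫ + ∫ ξ in Icc a b, ⟪A₁ ξ x₀ - g ξ - μ • x₁ ξ, x₁ ξ⟫
      = ⟪A₀ x₀ + x₁ b, x₀⟫ + (∫ ξ in Icc a b, ⟪A₁ ξ x₀ - g ξ, x₁ ξ⟫)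
        - μ * (‖x₀‖ ^ 2 + ∫ ξ in Icc a b, ‖x₁ ξ‖ ^ 2) := by
  rw [inner_sub_left, real_inner_smul_left, real_inner_self_eq_norm_sq,
    integral_inner_sub_smul_self (h := fun ξ => A₁ ξ x₀ - g ξ)
      ((hA₁.apply_continuousLinearMap x₀).sub hg)
      (memLp_of_eqOn_primitive hab (hg.integrable one_le_two) hx₁ 2)]
  ring

variable [CompleteSpace E]

theorem setIntegral_inner_eq_half_norm_sq_of_eqOn_primitive (hab : a ≤ b)
    (hg : IntegrableOn g (Icc a b)) (hx₁ : EqOn x₁ (fun ξ => ∫ ζ in a..ξ, g ζ) (Icc a b)) :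
    ∫ ξ in Icc a b, ⟪g ξ, x₁ ξ⟫ = (1 / 2) * ‖x₁ b‖ ^ 2 := by
  rw [setIntegral_congr_fun measurableSet_Icc fun ξ hξ => by rw [hx₁ hξ],
    integral_Icc_eq_integral_Ioc, ← intervalIntegral.integral_of_le hab,
    intervalIntegral.integral_inner_primitive hab
      ((intervalIntegrable_iff_integrableOn_Ioc_of_le hab).2 (hg.mono_set Ioc_subset_Icc_self)),
    hx₁ (right_mem_Icc.2 hab)]

theorem inner_delayOperator_le (hab : a ≤ b) (A₀ : E →L[ℝ] E)
    (hA₁ : MemLp A₁ 2 (volume.restrict (Icc a b))) (x₀ : E)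
    (hg : MemLp g 2 (volume.restrict (Icc a b)))
    (hx₁ : EqOn x₁ (fun ξ => ∫ ζ in a..ξ, g ζ) (Icc a b)) :
    ⟪A₀ x₀ + x₁ b, x₀⟫ + ∫ ξ in Icc a b, ⟪A₁ ξ x₀ - g ξ, x₁ ξ⟫
      ≤ (‖A₀‖ + 1) * ‖x₀‖ ^ 2
        + (1 / 2) * (∫ ξ in Icc a b, ‖A₁ ξ‖ ^ 2) * ∫ ξ in Icc a b, ‖x₁ ξ‖ ^ 2 := by
  have hgi : IntegrableOn g (Icc a b) := hg.integrable one_le_two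
  have hx₁L2 := memLp_of_eqOn_primitive hab hgi hx₁ 2
  have hsplit : ∫ ξ in Icc a b, ⟪A₁ ξ x₀ - g ξ, x₁ ξ⟫
      = (∫ ξ in Icc a b, ⟪A₁ ξ x₀, x₁ ξ⟫) - (1 / 2) * ‖x₁ b‖ ^ 2 := by
    simp_rw [inner_sub_left]
    rw [integral_sub ((hA₁.apply_continuousLinearMap x₀).integrable_inner hx₁L2)
      (hg.integrable_inner hx₁L2),
      setIntegral_inner_eq_half_norm_sq_of_eqOn_primitive hab hgi hx₁]
  have hpoint : ⟪A₀ x₀ + x₁ b, x₀⟫ ≤ ‖A₀‖ * ‖x₀‖ ^ 2 + ‖x₁ b‖ * ‖x₀‖ := by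
    rw [inner_add_left]
    nlinarith [real_inner_le_norm (A₀ x₀) x₀, real_inner_le_norm (x₁ b) x₀, A₀.le_opNorm x₀,
      norm_nonneg x₀]
  have hcross := integral_inner_apply_le hA₁ hx₁L2 x₀
  have hsq : (√(∫ ξ in Icc a b, ‖A₁ ξ‖ ^ 2) * √(∫ ξ in Icc a b, ‖x₁ ξ‖ ^ 2)) ^ 2
      = (∫ ξ in Icc a b, ‖A₁ ξ‖ ^ 2) * ∫ ξ in Icc a b, ‖x₁ ξ‖ ^ 2 := by
    rw [mul_pow, Real.sq_sqrt (integral_nonneg fun _ => by positivity),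
      Real.sq_sqrt (integral_nonneg fun _ => by positivity)]
  rw [hsplit]
  nlinarith [sq_nonneg (‖x₁ b‖ - ‖x₀‖),
    sq_nonneg (‖x₀‖ - √(∫ ξ in Icc a b, ‖A₁ ξ‖ ^ 2) * √(∫ ξ in Icc a b, ‖x₁ ξ‖ ^ 2))]

end DelayOperator

theorem dissipativity_of_delay_operator_general
    (n : ℕ) (d : ℝ) (hd : 0 < d)
    (a₀ : EuclideanSpace ℝ (Fin n) →L[ℝ] EuclideanSpace ℝ (Fin n))
    (a₁ : ℝ → EuclideanSpace ℝ (Fin n) →L[ℝ] EuclideanSpace ℝ (Fin n))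
    (ha₁ : MemLp a₁ 2 (volume.restrict (Set.Icc (-d) 0)))
    (μ₀ : ℝ)
    (hμ₀ : μ₀ = max (‖a₀‖ + 1) ((1/2) * ∫ ξ in Set.Icc (-d) 0, ‖a₁ ξ‖^2))
    -- x = (x₀, x₁) ∈ D(𝒜): x₁(ξ) = ∫_{-d}^{ξ} g, with g ∈ L² (so x₁(-d) = 0 and x₁' = g a.e.)
    (x₀ : EuclideanSpace ℝ (Fin n)) (x₁ g : ℝ → EuclideanSpace ℝ (Fin n))
    (hg : MemLp g 2 (volume.restrict (Set.Icc (-d) 0)))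
    (hx₁ : ∀ ξ ∈ Set.Icc (-d) 0, x₁ ξ = ∫ ζ in (-d)..ξ, g ζ) :
    (⟪a₀ x₀ + x₁ 0, x₀⟫ + ∫ ξ in Set.Icc (-d) 0, ⟪a₁ ξ x₀ - g ξ, x₁ ξ⟫
        ≤ μ₀ * (‖x₀‖^2 + ∫ ξ in Set.Icc (-d) 0, ‖x₁ ξ‖^2))
    ∧ ∀ μ ≥ μ₀,
      ⟪a₀ x₀ + x₁ 0 - μ • x₀, x₀⟫
        + ∫ ξ in Set.Icc (-d) 0, ⟪a₁ ξ x₀ - g ξ - μ • x₁ ξ, x₁ ξ⟫ ≤ 0 := by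
  have hd₀ : -d ≤ 0 := by linarith
  have hμ₁ : ‖a₀‖ + 1 ≤ μ₀ := hμ₀ ▸ le_max_left _ _
  have hμ₂ : (1 / 2) * ∫ ξ in Icc (-d) 0, ‖a₁ ξ‖ ^ 2 ≤ μ₀ := hμ₀ ▸ le_max_right _ _
  have hX : 0 ≤ ∫ ξ in Icc (-d) 0, ‖x₁ ξ‖ ^ 2 := integral_nonneg fun _ => by positivity
  have hbound : ⟪a₀ x₀ + x₁ 0, x₀⟫ + ∫ ξ in Icc (-d) 0, ⟪a₁ ξ x₀ - g ξ, x₁ ξ⟫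
      ≤ μ₀ * (‖x₀‖ ^ 2 + ∫ ξ in Icc (-d) 0, ‖x₁ ξ‖ ^ 2) := by
    refine (inner_delayOperator_le hd₀ a₀ ha₁ x₀ hg hx₁).trans ?_
    nlinarith [mul_le_mul_of_nonneg_right hμ₁ (sq_nonneg ‖x₀‖),
      mul_le_mul_of_nonneg_right hμ₂ hX]
  refine ⟨hbound, fun μ hμ => ?_⟩
  rw [inner_delayOperator_sub_smul_eq hd₀ a₀ ha₁ x₀ hg hx₁ μ]
  nlinarith [mul_le_mul_of_nonneg_right hμ (add_nonneg (sq_nonneg ‖x₀‖) hX)]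

/-- For every x = (x₀,x₁) ∈ D(𝒜) one has ⟨𝒜x, x⟩_X ≤ μ₀ |x|²_X,
where 𝒜x = (a₀x₀ + x₁(0), ξ ↦ a₁(ξ)x₀ − x₁'(ξ)) and
μ₀ = max{|a₀| + 1, (1/2)‖a₁‖²_{L²}}.  Consequently, for every μ ≥ μ₀ the operator
𝒜 − μI is dissipative: ⟨𝒜x − μx, x⟩_X ≤ 0 for all x ∈ D(𝒜). -/
theorem dissipativity_of_delay_operator
    (n : ℕ) (hn : 1 ≤ n) (d : ℝ) (hd : 0 < d)
    (a₀ : EuclideanSpace ℝ (Fin n) →L[ℝ] EuclideanSpace ℝ (Fin n))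
    (a₁ : ℝ → EuclideanSpace ℝ (Fin n) →L[ℝ] EuclideanSpace ℝ (Fin n))
    (ha₁ : MemLp a₁ 2 (volume.restrict (Set.Icc (-d) 0)))
    (μ₀ : ℝ)
    (hμ₀ : μ₀ = max (‖a₀‖ + 1) ((1/2) * ∫ ξ in Set.Icc (-d) 0, ‖a₁ ξ‖^2))
    -- x = (x₀, x₁) ∈ D(𝒜): x₁(ξ) = ∫_{-d}^{ξ} g, with g ∈ L² (so x₁(-d) = 0 and x₁' = g a.e.)
    (x₀ : EuclideanSpace ℝ (Fin n)) (x₁ g : ℝ → EuclideanSpace ℝ (Fin n))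
    (hg : MemLp g 2 (volume.restrict (Set.Icc (-d) 0)))
    (hx₁ : ∀ ξ ∈ Set.Icc (-d) 0, x₁ ξ = ∫ ζ in (-d)..ξ, g ζ) :
    (⟪a₀ x₀ + x₁ 0, x₀⟫ + ∫ ξ in Set.Icc (-d) 0, ⟪a₁ ξ x₀ - g ξ, x₁ ξ⟫
        ≤ μ₀ * (‖x₀‖^2 + ∫ ξ in Set.Icc (-d) 0, ‖x₁ ξ‖^2))
    ∧ ∀ μ ≥ μ₀,
      ⟪a₀ x₀ + x₁ 0 - μ • x₀, x₀⟫
        + ∫ ξ in Set.Icc (-d) 0, ⟪a₁ ξ x₀ - g ξ - μ • x₁ ξ, x₁ ξ⟫ ≤ 0 :=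
  dissipativity_of_delay_operator_general n d hd a₀ a₁ ha₁ μ₀ hμ₀ x₀ x₁ g hg hx₁
end

section
/- Let μ ≥ μ₀ and λ > 0. Then for every y = (y₀,y₁) ∈ X there exists a unique x ∈ D(𝒜) such that λx − (𝒜x − μx) = y, and it is given explicitly by x₀ = [(λ+μ)I_n − a₀ − ∫_{-d}^0 e^{(λ+μ)r} a₁(r) dr]^{−1}( y₀ + ∫_{-d}^0 e^{(λ+μ)r} y₁(r) dr ) and x₁(ξ) = ∫_{-d}^{ξ} e^{−(λ+μ)(ξ−r)}( y₁(r) + a₁(r)x₀ ) dr. In particular λI − (𝒜 − μI) : D(𝒜) → X is a bijection, so that together with dissipativity the operator 𝒜 − μI is maximal dissipative for every μ ≥ μ₀. -/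
/-!
With `β = λ + μ`, the second component of `λx − (𝒜x − μx) = y` is the linear equation
`x₁' = h − β x₁`, `x₁(−d) = 0`, with forcing `h = y₁ + a₁ x₀`. Variation of constants solves it,
and Grönwall's inequality shows that this is its only solution in integrated form. Evaluating the
solution at `0` turns the first component into `Δ(β) x₀ = y₀ + ∫ e^{βr} y₁(r) dr` for the
characteristic operator `Δ(β) = β − a₀ − ∫ e^{βr} a₁(r) dr`. For `β > μ₀` the AM–GM inequality gives
`‖∫ e^{βr} a₁(r) dr‖ ≤ 1`, so `‖a₀ + ∫ e^{βr} a₁(r) dr‖ < β` and `Δ(β)` is invertible.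
-/

open MeasureTheory RealInnerProductSpace
noncomputable section

open Set intervalIntegral Real Topology

theorem MeasureTheory.IntegrableOn.intervalIntegrable_of_mem_Icc {E : Type*} [NormedAddCommGroup E]
    {f : ℝ → E} {a b ξ : ℝ} (hf : IntegrableOn f (Icc a b)) (hξ : ξ ∈ Icc a b) :
    IntervalIntegrable f volume a ξ :=
  (intervalIntegrable_iff_integrableOn_Icc_of_le hξ.1).2 (hf.mono_set (Icc_subset_Icc_right hξ.2))

theorem mul_integral_exp_neg_mul (β s ξ : ℝ) :
    β * ∫ r in s..ξ, exp (-β * r) = exp (-β * s) - exp (-β * ξ) := by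
  have hderiv (r : ℝ) : HasDerivAt (fun r => -exp (-β * r)) (β * exp (-β * r)) r := by
    have hlin : HasDerivAt (fun r => -β * r) (-β) r := by
      simpa using (hasDerivAt_id r).const_mul (-β)
    exact hlin.exp.neg.congr_deriv (by ring)
  rw [← intervalIntegral.integral_const_mul, integral_eq_sub_of_hasDerivAt (fun r _ => hderiv r)
    ((by fun_prop : Continuous fun r => β * exp (-β * r)).intervalIntegrable _ _)]
  ring

theorem setIntegral_exp_mul_le_inv {s : Set ℝ} (hs : s ⊆ Iic 0) {κ : ℝ} (hκ : 0 < κ) :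
    ∫ r in s, exp (κ * r) ≤ κ⁻¹ := by
  calc ∫ r in s, exp (κ * r) ≤ ∫ r in Iic 0, exp (κ * r) :=
        setIntegral_mono_set (integrableOn_exp_mul_Iic hκ 0)
          (.of_forall fun r => (exp_pos _).le) (.of_forall hs)
    _ = κ⁻¹ := by rw [integral_exp_mul_Iic hκ, mul_zero, exp_zero, one_div]

variable {E : Type*} [NormedAddCommGroup E] [NormedSpace ℝ E]

theorem ContinuousLinearMap.isUnit_smul_id_sub_of_norm_lt [CompleteSpace E] {A : E →L[ℝ] E}
    {β : ℝ} (h : ‖A‖ < β) : IsUnit (β • ContinuousLinearMap.id ℝ E - A) := by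
  have hβ : ‖A‖ * ‖(1 : E →L[ℝ] E)‖ < ‖β‖ := by
    rw [Real.norm_of_nonneg ((norm_nonneg A).trans h.le)]
    exact (mul_le_of_le_one_right (norm_nonneg A) norm_id_le).trans_lt h
  have hres := spectrum.mem_resolventSet_of_norm_lt_mul hβ
  rw [spectrum.mem_resolventSet_iff, Algebra.algebraMap_eq_smul_one] at hres
  exact hres

theorem norm_setIntegral_exp_smul_le {s : Set ℝ} (hs : s ⊆ Iic 0) {f : ℝ → E}
    (hf : MemLp f 2 (volume.restrict s)) {β c : ℝ} (hβ : 0 < β) (hc : 0 < c) :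
    ‖∫ r in s, exp (β * r) • f r‖ ≤ c / (2 * β) + (∫ r in s, ‖f r‖ ^ 2) / (4 * c) := by
  have hexp : IntegrableOn (fun r => exp (2 * β * r)) s :=
    (integrableOn_exp_mul_Iic (by positivity) 0).mono_set hs
  have hsq : IntegrableOn (fun r => ‖f r‖ ^ 2) s := hf.integrable_norm_pow two_ne_zero
  have hamgm (r : ℝ) : ‖exp (β * r) • f r‖ ≤ c * exp (2 * β * r) + ‖f r‖ ^ 2 / (4 * c) := by
    have hsplit : exp (2 * β * r) = exp (β * r) ^ 2 := by rw [← exp_nat_mul]; ring_nf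
    rw [norm_smul, norm_of_nonneg (exp_pos _).le, hsplit, ← sub_le_iff_le_add',
      le_div_iff₀ (by positivity)]
    nlinarith [sq_nonneg (2 * c * exp (β * r) - ‖f r‖)]
  calc ‖∫ r in s, exp (β * r) • f r‖ ≤ ∫ r in s, ‖exp (β * r) • f r‖ :=
        norm_integral_le_integral_norm _
    _ ≤ ∫ r in s, (c * exp (2 * β * r) + ‖f r‖ ^ 2 / (4 * c)) :=
        integral_mono_of_nonneg (.of_forall fun _ => norm_nonneg _)
          ((hexp.const_mul c).add (hsq.div_const _)) (.of_forall hamgm)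
    _ = c * (∫ r in s, exp (2 * β * r)) + (∫ r in s, ‖f r‖ ^ 2) / (4 * c) := by
        rw [integral_add (hexp.const_mul c) (hsq.div_const _), MeasureTheory.integral_const_mul,
          MeasureTheory.integral_div]
    _ ≤ c / (2 * β) + (∫ r in s, ‖f r‖ ^ 2) / (4 * c) := by
        rw [div_eq_mul_inv c]
        exact add_le_add_left (mul_le_mul_of_nonneg_left
          (setIntegral_exp_mul_le_inv hs (κ := 2 * β) (by positivity)) hc.le) _

theorem continuousOn_integral_of_integrableOn_Icc {f : ℝ → E} {a b : ℝ}
    (hf : IntegrableOn f (Icc a b)) : ContinuousOn (fun ξ => ∫ s in a..ξ, f s) (Icc a b) :=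
  (continuousOn_primitive hf).congr fun _ hξ => integral_of_le hξ.1

theorem integral_smul_primitive_eq_integral_primitive_smul [CompleteSpace E] {k : ℝ → ℝ}
    {φ : ℝ → E} {a b : ℝ} (hk : Continuous k) (hφ : IntervalIntegrable φ volume a b)
    (hab : a ≤ b) :
    ∫ r in a..b, k r • ∫ s in a..r, φ s = ∫ s in a..b, (∫ r in s..b, k r) • φ s := by
  set ν := volume.restrict (Ioc a b)
  set F : ℝ → ℝ → E := fun r s => if s ≤ r then k r • φ s else 0
  have hF : Integrable (Function.uncurry F) (ν.prod ν) := by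
    have hφν : Integrable φ ν := (intervalIntegrable_iff_integrableOn_Ioc_of_le hab).1 hφ
    have hF_eq : Function.uncurry F
        = {p : ℝ × ℝ | p.2 ≤ p.1}.indicator (fun p => k p.1 • φ p.2) := by
      ext p; simp [F, indicator_apply, Function.uncurry]
    rw [hF_eq]
    exact (hk.integrableOn_Ioc.smul_prod hφν).indicator
      (measurableSet_le measurable_snd measurable_fst)
  have hleft : ∀ r ∈ Ioc a b, ∫ s, F r s ∂ν = k r • ∫ s in a..r, φ s := by
    intro r hr
    have hFr : F r = (Iic r).indicator (fun s => k r • φ s) := by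
      ext s; simp [F, indicator_apply]
    rw [hFr, setIntegral_indicator measurableSet_Iic, Ioc_inter_Iic, min_eq_right hr.2,
      MeasureTheory.integral_smul, integral_of_le hr.1.le]
  have hright : ∀ s ∈ Ioc a b, ∫ r, F r s ∂ν = (∫ r in s..b, k r) • φ s := by
    intro s hs
    have hFs : (fun r => F r s) = (Ici s).indicator (fun r => k r • φ s) := by
      ext r; simp [F, indicator_apply]
    have hIoc : Ioc a b ∩ Ici s = Icc s b := by
      ext r; simp only [mem_inter_iff, mem_Ioc, mem_Ici, mem_Icc]; grind [hs.1]
    rw [hFs, setIntegral_indicator measurableSet_Ici, hIoc, _root_.integral_smul_const,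
      integral_of_le hs.2, integral_Icc_eq_integral_Ioc]
  calc ∫ r in a..b, k r • ∫ s in a..r, φ s = ∫ r, ∫ s, F r s ∂ν ∂ν := by
        rw [integral_of_le hab]
        exact setIntegral_congr_fun measurableSet_Ioc fun r hr => (hleft r hr).symm
    _ = ∫ s, ∫ r, F r s ∂ν ∂ν := integral_integral_swap hF
    _ = ∫ s in a..b, (∫ r in s..b, k r) • φ s := by
        rw [integral_of_le hab]
        exact setIntegral_congr_fun measurableSet_Ioc hright

theorem eqOn_zero_of_eq_smul_integral [CompleteSpace E] {w : ℝ → E} {c a b : ℝ}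
    (hw : ContinuousOn w (Icc a b)) (hweq : ∀ ξ ∈ Icc a b, w ξ = c • ∫ s in a..ξ, w s) :
    EqOn w 0 (Icc a b) := by
  set V := fun ξ => ∫ s in a..ξ, w s
  have hV_deriv : ∀ x ∈ Ico a b, HasDerivWithinAt V (w x) (Ici x) x := by
    intro x hx
    have hIcc : Icc a b ∈ 𝓝[>] x := Icc_mem_nhdsGT_of_mem ⟨hx.1, hx.2⟩
    exact integral_hasDerivWithinAt_right
      ((hw.mono (Icc_subset_Icc_right hx.2.le)).intervalIntegrable_of_Icc hx.1)
      ((hw.stronglyMeasurableAtFilter_nhdsWithin measurableSet_Icc x).filter_mono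
        (nhdsWithin_le_of_mem hIcc))
      ((hw x (Ico_subset_Icc_self hx)).mono_of_mem_nhdsWithin hIcc)
  have hV : EqOn V 0 (Icc a b) :=
    eq_zero_of_abs_deriv_le_mul_abs_self_of_eq_zero_right
      (continuousOn_integral_of_integrableOn_Icc (hw.integrableOn_compact isCompact_Icc))
      hV_deriv (by simp [V])
      fun x hx => by rw [hweq x (Ico_subset_Icc_self hx), norm_smul, Real.norm_eq_abs]
  intro ξ hξ
  rw [hweq ξ hξ]
  simpa using congrArg (c • ·) (hV hξ)

def characteristicOperator (a₀ : E →L[ℝ] E) (a₁ : ℝ → E →L[ℝ] E) (d β : ℝ) : E →L[ℝ] E :=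
  β • ContinuousLinearMap.id ℝ E - a₀ - ∫ r in Icc (-d) 0, exp (β * r) • a₁ r

theorem isUnit_characteristicOperator [CompleteSpace E] {a₀ : E →L[ℝ] E} {a₁ : ℝ → E →L[ℝ] E}
    {d μ₀ β : ℝ}
    (ha₁ : MemLp a₁ 2 (volume.restrict (Icc (-d) 0))) (ha₀_le : ‖a₀‖ + 1 ≤ μ₀)
    (ha₁_le : (1/2) * ∫ ξ in Icc (-d) 0, ‖a₁ ξ‖ ^ 2 ≤ μ₀) (hβ : μ₀ < β) :
    IsUnit (characteristicOperator a₀ a₁ d β) := by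
  have hμ₀ : 0 < μ₀ := by linarith [norm_nonneg a₀]
  -- With the weight `c = μ₀`, both terms of the bound are at most `1/2`.
  have hint : ‖∫ r in Icc (-d) 0, exp (β * r) • a₁ r‖ ≤ 1 := by
    have hbound := norm_setIntegral_exp_smul_le Icc_subset_Iic_self ha₁ (hμ₀.trans hβ) hμ₀
    have h₁ : μ₀ / (2 * β) ≤ 1 / 2 := by rw [div_le_iff₀ (by linarith)]; linarith
    have h₂ : (∫ r in Icc (-d) 0, ‖a₁ r‖ ^ 2) / (4 * μ₀) ≤ 1 / 2 := by
      rw [div_le_iff₀ (by linarith)]; linarith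
    linarith
  rw [characteristicOperator, sub_sub]
  exact ContinuousLinearMap.isUnit_smul_id_sub_of_norm_lt ((norm_add_le _ _).trans_lt (by linarith))

/-- Variation of constants: the solution of `u' = h - β u`, `u a = 0`. -/
def dampedPrimitive (β a : ℝ) (h : ℝ → E) (ξ : ℝ) : E :=
  ∫ s in a..ξ, exp (-β * (ξ - s)) • h s

variable {β a b : ℝ} {h : ℝ → E}

theorem dampedPrimitive_eq_exp_smul (ξ : ℝ) :
    dampedPrimitive β a h ξ = exp (-β * ξ) • ∫ s in a..ξ, exp (β * s) • h s := by
  rw [dampedPrimitive, ← intervalIntegral.integral_smul]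
  congr 1 with s
  rw [smul_smul, ← exp_add]
  ring_nf

theorem dampedPrimitive_zero (ha : a ≤ 0) :
    dampedPrimitive β a h 0 = ∫ s in Icc a 0, exp (β * s) • h s := by
  rw [dampedPrimitive, integral_of_le ha, integral_Icc_eq_integral_Ioc]
  congr 1 with s
  ring_nf

theorem dampedPrimitive_zero_add_apply {y : ℝ → E} {A : ℝ → E →L[ℝ] E} (ha : a ≤ 0)
    (hy : IntegrableOn y (Icc a 0)) (hA : IntegrableOn A (Icc a 0)) (z : E) :
    dampedPrimitive β a (fun r => y r + A r z) 0
      = (∫ r in Icc a 0, exp (β * r) • y r) + (∫ r in Icc a 0, exp (β * r) • A r) z := by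
  have hA_exp : IntegrableOn (fun r => exp (β * r) • A r) (Icc a 0) :=
    hA.continuousOn_smul (by fun_prop) isCompact_Icc
  rw [dampedPrimitive_zero ha, ContinuousLinearMap.integral_apply hA_exp]
  simp only [smul_add, smul_apply]
  exact integral_add (hy.continuousOn_smul (by fun_prop) isCompact_Icc)
    ((ContinuousLinearMap.apply ℝ E z).integrable_comp hA_exp)

theorem continuousOn_dampedPrimitive (hh : IntegrableOn h (Icc a b)) :
    ContinuousOn (dampedPrimitive β a h) (Icc a b) := by
  simp_rw [funext (dampedPrimitive_eq_exp_smul (β := β) (a := a) (h := h))]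
  exact (continuous_exp.comp (continuous_const_mul (-β))).continuousOn.smul
    (continuousOn_integral_of_integrableOn_Icc
      (hh.continuousOn_smul (by fun_prop) isCompact_Icc))

theorem memLp_dampedPrimitive (hh : IntegrableOn h (Icc a b)) (p : ENNReal) :
    MemLp (dampedPrimitive β a h) p (volume.restrict (Icc a b)) := by
  obtain ⟨C, hC⟩ := isCompact_Icc.exists_bound_of_continuousOn (continuousOn_dampedPrimitive hh)
  exact .of_bound ((continuousOn_dampedPrimitive hh).aestronglyMeasurable measurableSet_Icc) C
    (ae_restrict_of_forall_mem measurableSet_Icc hC)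

variable [CompleteSpace E]

theorem dampedPrimitive_add_smul_integral {ξ : ℝ} (hh : IntervalIntegrable h volume a ξ)
    (haξ : a ≤ ξ) :
    dampedPrimitive β a h ξ + β • ∫ r in a..ξ, dampedPrimitive β a h r = ∫ s in a..ξ, h s := by
  have hφ : IntervalIntegrable (fun s => exp (β * s) • h s) volume a ξ :=
    hh.continuousOn_smul (by fun_prop)
  suffices β • ∫ r in a..ξ, dampedPrimitive β a h r
      = (∫ s in a..ξ, h s) - dampedPrimitive β a h ξ by
    rw [this]; abel
  calc β • ∫ r in a..ξ, dampedPrimitive β a h r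
      = ∫ s in a..ξ, (β * ∫ r in s..ξ, exp (-β * r)) • exp (β * s) • h s := by
        rw [integral_congr (fun r _ => dampedPrimitive_eq_exp_smul r),
          integral_smul_primitive_eq_integral_primitive_smul (k := fun r => exp (-β * r))
            (by fun_prop) hφ haξ, ← intervalIntegral.integral_smul]
        simp_rw [smul_smul, mul_assoc]
    _ = ∫ s in a..ξ, (h s - exp (-β * ξ) • exp (β * s) • h s) := by
        congr 1 with s
        rw [mul_integral_exp_neg_mul, sub_smul, smul_smul (exp _), ← exp_add]
        simp
    _ = (∫ s in a..ξ, h s) - dampedPrimitive β a h ξ := by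
        have hφ' : IntervalIntegrable (fun s => exp (-β * ξ) • exp (β * s) • h s) volume a ξ :=
          hφ.smul _
        rw [intervalIntegral.integral_sub hh hφ', intervalIntegral.integral_smul,
          dampedPrimitive_eq_exp_smul]

theorem dampedPrimitive_eq_integral (hh : IntegrableOn h (Icc a b)) {ξ : ℝ} (hξ : ξ ∈ Icc a b) :
    dampedPrimitive β a h ξ = ∫ ζ in a..ξ, (h ζ - β • dampedPrimitive β a h ζ) := by
  have hWi : IntervalIntegrable (fun ζ => β • dampedPrimitive β a h ζ) volume a ξ :=
    ((continuousOn_dampedPrimitive hh).mono (Icc_subset_Icc_right hξ.2)).intervalIntegrable_of_Icc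
      hξ.1 |>.smul β
  rw [intervalIntegral.integral_sub (hh.intervalIntegrable_of_mem_Icc hξ) hWi,
    intervalIntegral.integral_smul,
    ← dampedPrimitive_add_smul_integral (hh.intervalIntegrable_of_mem_Icc hξ) hξ.1,
    add_sub_cancel_right]

theorem eqOn_dampedPrimitive_of_integral_eq {x g : ℝ → E} (hg : IntegrableOn g (Icc a b))
    (hh : IntegrableOn h (Icc a b)) (hx : ∀ ξ ∈ Icc a b, x ξ = ∫ ζ in a..ξ, g ζ)
    (hgx : ∀ᵐ ξ ∂volume.restrict (Icc a b), g ξ = h ξ - β • x ξ) :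
    EqOn x (dampedPrimitive β a h) (Icc a b) := by
  have hx_cont : ContinuousOn x (Icc a b) :=
    (continuousOn_integral_of_integrableOn_Icc hg).congr hx
  have hW_cont : ContinuousOn (dampedPrimitive β a h) (Icc a b) := continuousOn_dampedPrimitive hh
  have hgx' := (ae_restrict_iff' measurableSet_Icc).1 hgx
  have hzero := eqOn_zero_of_eq_smul_integral (c := -β) (hx_cont.sub hW_cont) fun ξ hξ => by
    have hxi := (hx_cont.mono (Icc_subset_Icc_right hξ.2)).intervalIntegrable_of_Icc
      (μ := volume) hξ.1
    have hWi := (hW_cont.mono (Icc_subset_Icc_right hξ.2)).intervalIntegrable_of_Icc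
      (μ := volume) hξ.1
    have hx_volterra : x ξ = ∫ ζ in a..ξ, (h ζ - β • x ζ) := by
      refine (hx ξ hξ).trans (integral_congr_ae ?_)
      filter_upwards [hgx'] with ζ hζ hζξ
      rw [uIoc_of_le hξ.1] at hζξ
      exact hζ ⟨hζξ.1.le, hζξ.2.trans hξ.2⟩
    have hW := eq_sub_of_add_eq
      (dampedPrimitive_add_smul_integral (β := β) (hh.intervalIntegrable_of_mem_Icc hξ) hξ.1)
    have hβxi : IntervalIntegrable (fun ζ => β • x ζ) volume a ξ := hxi.smul β
    rw [intervalIntegral.integral_sub (hh.intervalIntegrable_of_mem_Icc hξ) hβxi,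
      intervalIntegral.integral_smul] at hx_volterra
    simp only [Pi.sub_apply]
    rw [hx_volterra, hW, intervalIntegral.integral_sub hxi hWi]
    module
  exact fun ξ hξ => sub_eq_zero.1 (hzero hξ)

theorem maximal_dissipativity_resolvent_general
    (n : ℕ) (d : ℝ) (hd : 0 < d)
    (a₀ : EuclideanSpace ℝ (Fin n) →L[ℝ] EuclideanSpace ℝ (Fin n))
    (a₁ : ℝ → EuclideanSpace ℝ (Fin n) →L[ℝ] EuclideanSpace ℝ (Fin n))
    (ha₁ : MemLp a₁ 2 (volume.restrict (Set.Icc (-d) 0)))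
    (μ₀ : ℝ)
    (hμ₀ : μ₀ = max (‖a₀‖ + 1) ((1/2) * ∫ ξ in Set.Icc (-d) 0, ‖a₁ ξ‖^2))
    (μ : ℝ) (hμ : μ₀ ≤ μ) (lam : ℝ) (hlam : 0 < lam)
    (y₀ : EuclideanSpace ℝ (Fin n))
    (y₁ : ℝ → EuclideanSpace ℝ (Fin n))
    (hy₁ : MemLp y₁ 2 (volume.restrict (Set.Icc (-d) 0))) :
    ∃ (x₀ : EuclideanSpace ℝ (Fin n)) (x₁ g : ℝ → EuclideanSpace ℝ (Fin n)),
      -- x = (x₀,x₁) ∈ D(𝒜), with x₁' = g ∈ L², x₁(-d) = 0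
      MemLp g 2 (volume.restrict (Set.Icc (-d) 0))
      ∧ (∀ ξ ∈ Set.Icc (-d) 0, x₁ ξ = ∫ ζ in (-d)..ξ, g ζ)
      -- the equation λx − (𝒜x − μx) = y, componentwise
      ∧ lam • x₀ - (a₀ x₀ + x₁ 0 - μ • x₀) = y₀
      ∧ (∀ᵐ ξ ∂(volume.restrict (Set.Icc (-d) 0)),
          lam • x₁ ξ - (a₁ ξ x₀ - g ξ - μ • x₁ ξ) = y₁ ξ)
      -- the explicit formulas
      ∧ x₀ = Ring.inverse
            ((lam + μ) • (ContinuousLinearMap.id ℝ (EuclideanSpace ℝ (Fin n)))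
              - a₀ - ∫ r in Set.Icc (-d) 0, Real.exp ((lam + μ) * r) • a₁ r)
            (y₀ + ∫ r in Set.Icc (-d) 0, Real.exp ((lam + μ) * r) • y₁ r)
      ∧ (∀ ξ ∈ Set.Icc (-d) 0,
          x₁ ξ = ∫ r in (-d)..ξ, Real.exp (-(lam + μ) * (ξ - r)) • (y₁ r + a₁ r x₀))
      -- uniqueness
      ∧ (∀ (x₀' : EuclideanSpace ℝ (Fin n)) (x₁' g' : ℝ → EuclideanSpace ℝ (Fin n)),
          MemLp g' 2 (volume.restrict (Set.Icc (-d) 0)) →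
          (∀ ξ ∈ Set.Icc (-d) 0, x₁' ξ = ∫ ζ in (-d)..ξ, g' ζ) →
          lam • x₀' - (a₀ x₀' + x₁' 0 - μ • x₀') = y₀ →
          (∀ᵐ ξ ∂(volume.restrict (Set.Icc (-d) 0)),
              lam • x₁' ξ - (a₁ ξ x₀' - g' ξ - μ • x₁' ξ) = y₁ ξ) →
          x₀' = x₀ ∧ ∀ ξ ∈ Set.Icc (-d) 0, x₁' ξ = x₁ ξ) := by
  set β := lam + μ with hβ
  have had : -d ≤ 0 := by linarith
  set T := characteristicOperator a₀ a₁ d β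
  set Ky := ∫ r in Icc (-d) 0, exp (β * r) • y₁ r
  have hT : IsUnit T :=
    isUnit_characteristicOperator ha₁ (hμ₀ ▸ le_max_left _ _) (hμ₀ ▸ le_max_right _ _) (by linarith)
  set h := fun z r => y₁ r + a₁ r z
  have hh (z : EuclideanSpace ℝ (Fin n)) : MemLp (h z) 2 (volume.restrict (Icc (-d) 0)) :=
    hy₁.add ((ContinuousLinearMap.apply ℝ (EuclideanSpace ℝ (Fin n)) z).comp_memLp' ha₁)
  have hhi (z : EuclideanSpace ℝ (Fin n)) : IntegrableOn (h z) (Icc (-d) 0) :=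
    (hh z).integrable one_le_two
  have hbdry (z : EuclideanSpace ℝ (Fin n)) :
      lam • z - (a₀ z + dampedPrimitive β (-d) (h z) 0 - μ • z) = T z - Ky := by
    rw [dampedPrimitive_zero_add_apply had (hy₁.integrable one_le_two) (ha₁.integrable one_le_two)]
    simp only [T, characteristicOperator, hβ, sub_apply, smul_apply, ContinuousLinearMap.id_apply]
    module
  set x₀ := Ring.inverse T (y₀ + Ky)
  refine ⟨x₀, dampedPrimitive β (-d) (h x₀),
    fun ξ => h x₀ ξ - β • dampedPrimitive β (-d) (h x₀) ξ,
    (hh x₀).sub ((memLp_dampedPrimitive (hhi x₀) 2).const_smul β),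
    fun ξ hξ => dampedPrimitive_eq_integral (hhi x₀) hξ,
    by rw [hbdry, sub_eq_iff_eq_add]; exact DFunLike.congr_fun (Ring.mul_inverse_cancel T hT) _,
    .of_forall fun ξ => by simp only [h, hβ]; module, rfl, fun ξ _ => rfl, ?_⟩
  intro x₀' x₁' g' hg' hx₁' heq₀ heq₁
  have hx₁'_eq : EqOn x₁' (dampedPrimitive β (-d) (h x₀')) (Icc (-d) 0) :=
    eqOn_dampedPrimitive_of_integral_eq (hg'.integrable one_le_two) (hhi x₀') hx₁'
      (heq₁.mono fun ξ hξ => by simp only [h]; rw [← hξ, hβ]; module)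
  have hx₀' : x₀' = x₀ := by
    rw [hx₁'_eq ⟨had, le_rfl⟩, hbdry, sub_eq_iff_eq_add] at heq₀
    rw [show x₀ = Ring.inverse T (T x₀') by rw [heq₀]]
    exact (DFunLike.congr_fun (Ring.inverse_mul_cancel T hT) x₀').symm
  exact ⟨hx₀', fun ξ hξ => by rw [hx₁'_eq hξ, hx₀']⟩

/-- For μ ≥ μ₀ and λ > 0, for every y = (y₀,y₁) ∈ X there is a unique
x = (x₀,x₁) ∈ D(𝒜) (with a.e. derivative g of x₁) solving λx − (𝒜x − μx) = y, and it is
given by the explicit resolvent formulas.  In particular λI − (𝒜 − μI) : D(𝒜) → X is a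
bijection, so together with dissipativity 𝒜 − μI is maximal dissipative for μ ≥ μ₀. -/
theorem maximal_dissipativity_resolvent
    (n : ℕ) (hn : 1 ≤ n) (d : ℝ) (hd : 0 < d)
    (a₀ : EuclideanSpace ℝ (Fin n) →L[ℝ] EuclideanSpace ℝ (Fin n))
    (a₁ : ℝ → EuclideanSpace ℝ (Fin n) →L[ℝ] EuclideanSpace ℝ (Fin n))
    (ha₁ : MemLp a₁ 2 (volume.restrict (Set.Icc (-d) 0)))
    (μ₀ : ℝ)
    (hμ₀ : μ₀ = max (‖a₀‖ + 1) ((1/2) * ∫ ξ in Set.Icc (-d) 0, ‖a₁ ξ‖^2))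
    (μ : ℝ) (hμ : μ₀ ≤ μ) (lam : ℝ) (hlam : 0 < lam)
    (y₀ : EuclideanSpace ℝ (Fin n))
    (y₁ : ℝ → EuclideanSpace ℝ (Fin n))
    (hy₁ : MemLp y₁ 2 (volume.restrict (Set.Icc (-d) 0))) :
    ∃ (x₀ : EuclideanSpace ℝ (Fin n)) (x₁ g : ℝ → EuclideanSpace ℝ (Fin n)),
      -- x = (x₀,x₁) ∈ D(𝒜), with x₁' = g ∈ L², x₁(-d) = 0
      MemLp g 2 (volume.restrict (Set.Icc (-d) 0))
      ∧ (∀ ξ ∈ Set.Icc (-d) 0, x₁ ξ = ∫ ζ in (-d)..ξ, g ζ)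
      -- the equation λx − (𝒜x − μx) = y, componentwise
      ∧ lam • x₀ - (a₀ x₀ + x₁ 0 - μ • x₀) = y₀
      ∧ (∀ᵐ ξ ∂(volume.restrict (Set.Icc (-d) 0)),
          lam • x₁ ξ - (a₁ ξ x₀ - g ξ - μ • x₁ ξ) = y₁ ξ)
      -- the explicit formulas
      ∧ x₀ = Ring.inverse
            ((lam + μ) • (ContinuousLinearMap.id ℝ (EuclideanSpace ℝ (Fin n)))
              - a₀ - ∫ r in Set.Icc (-d) 0, Real.exp ((lam + μ) * r) • a₁ r)
            (y₀ + ∫ r in Set.Icc (-d) 0, Real.exp ((lam + μ) * r) • y₁ r)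
      ∧ (∀ ξ ∈ Set.Icc (-d) 0,
          x₁ ξ = ∫ r in (-d)..ξ, Real.exp (-(lam + μ) * (ξ - r)) • (y₁ r + a₁ r x₀))
      -- uniqueness
      ∧ (∀ (x₀' : EuclideanSpace ℝ (Fin n)) (x₁' g' : ℝ → EuclideanSpace ℝ (Fin n)),
          MemLp g' 2 (volume.restrict (Set.Icc (-d) 0)) →
          (∀ ξ ∈ Set.Icc (-d) 0, x₁' ξ = ∫ ζ in (-d)..ξ, g' ζ) →
          lam • x₀' - (a₀ x₀' + x₁' 0 - μ • x₀') = y₀ →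
          (∀ᵐ ξ ∂(volume.restrict (Set.Icc (-d) 0)),
              lam • x₁' ξ - (a₁ ξ x₀' - g' ξ - μ • x₁' ξ) = y₁ ξ) →
          x₀' = x₀ ∧ ∀ ξ ∈ Set.Icc (-d) 0, x₁' ξ = x₁ ξ) :=
  maximal_dissipativity_resolvent_general n d hd a₀ a₁ ha₁ μ₀ hμ₀ μ hμ lam hlam y₀ y₁ hy₁
end
end

section
/- For every μ > μ₀, the linear map T_μ is a bounded operator on X (i.e. there exists K ≥ 0 with |T_μ z|_X ≤ K |z|_X for all z ∈ X), and moreover T_μ is a compact operator on X. -/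
/-!
The first component of `T_μ z` is a fixed matrix applied to `z₀ + ∫ e^{μr} z₁(r) dr`, and by
Cauchy–Schwarz it is bounded by a multiple of `|z|`; so on the unit ball it ranges over a bounded,
hence relatively compact, subset of `ℝⁿ`. The second component is the Volterra integral
`u(ξ) = ∫_{-d}^ξ e^{-μ(ξ-r)} g(r) dr` of `g = -z₁ + a₁ z₀ ∈ L²`. Splitting `u(ξ) - u(η)` at `η`
and applying Cauchy–Schwarz to each piece shows that `u` is bounded, and `1/2`-Hölder, with
constants that are multiples of `‖g‖₂` depending only on `μ` and `d`. So on the unit ball the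
second components are uniformly bounded and equicontinuous, and Arzelà–Ascoli makes them
relatively compact in `C([-d,0])`, hence in `L²`.
-/

open MeasureTheory RealInnerProductSpace
noncomputable section

/-- The Hilbert space X = ℝⁿ × L²([-d,0];ℝⁿ) (with the ℓ²-product inner product). -/
abbrev XSp (n : ℕ) (d : ℝ) :=
  WithLp 2 (EuclideanSpace ℝ (Fin n) ×
    Lp (EuclideanSpace ℝ (Fin n)) 2 (volume.restrict (Set.Icc (-d) 0)))

open Set Filter Topology
open scoped ENNReal BoundedContinuousFunction

theorem integral_norm_le_sqrt_measureReal_mul_eLpNorm {α E : Type*} [MeasurableSpace α]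
    [NormedAddCommGroup E] (ν : Measure α) [IsFiniteMeasure ν] {f : α → E} (hf : MemLp f 2 ν) :
    ∫ x, ‖f x‖ ∂ν ≤ √(ν.real univ) * (eLpNorm f 2 ν).toReal := by
  have h := eLpNorm_le_eLpNorm_mul_rpow_measure_univ (μ := ν) (p := 1) (q := 2) (by norm_num) hf.1
  rw [show 1 / (1 : ℝ≥0∞).toReal - 1 / (2 : ℝ≥0∞).toReal = 2⁻¹ by norm_num] at h
  rw [integral_norm_eq_lintegral_enorm hf.1, ← eLpNorm_one_eq_lintegral_enorm,
    Real.sqrt_eq_rpow, measureReal_def, one_div, ENNReal.toReal_rpow, mul_comm,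
    ← ENNReal.toReal_mul]
  exact ENNReal.toReal_mono (ENNReal.mul_ne_top hf.2.ne (by finiteness)) h

section ApplyCLM

variable {α E F : Type*} [MeasurableSpace α] {ν : Measure α} {p : ℝ≥0∞} [NormedAddCommGroup E]
  [NormedSpace ℝ E] [NormedAddCommGroup F] [NormedSpace ℝ F] {A : α → E →L[ℝ] F}

theorem MeasureTheory.MemLp.clm_apply (hA : MemLp A p ν) (v : E) : MemLp (fun x => A x v) p ν :=
  (ContinuousLinearMap.apply ℝ F v).comp_memLp' hA

theorem MeasureTheory.MemLp.eLpNorm_add_clm_apply_le [Fact (1 ≤ p)] {f : α → F}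
    (hf : MemLp f p ν) (hA : MemLp A p ν) (v : E) :
    (eLpNorm (fun x => f x + A x v) p ν).toReal
      ≤ (eLpNorm f p ν).toReal + (eLpNorm A p ν).toReal * ‖v‖ := by
  have hAv := hA.clm_apply v
  have hAv_le : eLpNorm (fun x => A x v) p ν ≤ ENNReal.ofReal ‖v‖ * eLpNorm A p ν :=
    eLpNorm_le_mul_eLpNorm_of_ae_le_mul
      (ae_of_all _ fun x => by rw [mul_comm]; exact (A x).le_opNorm v) p
  calc (eLpNorm (fun x => f x + A x v) p ν).toReal
      ≤ (eLpNorm f p ν).toReal + (eLpNorm (fun x => A x v) p ν).toReal := by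
        rw [← ENNReal.toReal_add hf.2.ne hAv.2.ne]
        exact ENNReal.toReal_mono (by finiteness) (eLpNorm_add_le hf.1 hAv.1 Fact.out)
    _ ≤ (eLpNorm f p ν).toReal + (eLpNorm A p ν).toReal * ‖v‖ := by
        grw [ENNReal.toReal_mono (by finiteness) hAv_le, ENNReal.toReal_mul,
          ENNReal.toReal_ofReal (norm_nonneg v), mul_comm]

theorem eLpNorm_neg_snd_add_clm_apply_fst_le [Fact (1 ≤ p)] {q : ℝ≥0∞} [Fact (1 ≤ q)]
    (hA : MemLp A p ν) (z : WithLp q (E × Lp F p ν)) :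
    (eLpNorm (fun r => -(z.snd r) + A r z.fst) p ν).toReal
      ≤ (1 + (eLpNorm A p ν).toReal) * ‖z‖ := by
  have h := MemLp.eLpNorm_add_clm_apply_le (f := fun r => -(z.snd r)) (Lp.memLp z.snd).neg hA z.fst
  rw [show (fun r => -(z.snd r)) = -⇑z.snd from rfl, eLpNorm_neg, ← Lp.norm_def] at h
  nlinarith [WithLp.norm_fst_le (x := z), WithLp.norm_snd_le (x := z), norm_nonneg z.fst,
    (ENNReal.toReal_nonneg : 0 ≤ (eLpNorm A p ν).toReal)]

end ApplyCLM

theorem WithLp.prod_norm_le_norm_fst_add_norm_snd {p : ℝ≥0∞} [Fact (1 ≤ p)] {α β : Type*}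
    [SeminormedAddCommGroup α] [SeminormedAddCommGroup β] (x : WithLp p (α × β)) :
    ‖x‖ ≤ ‖x.fst‖ + ‖x.snd‖ := by
  have hx : x = WithLp.toLp p (x.fst, 0) + WithLp.toLp p (0, x.snd) := by
    rw [← WithLp.toLp_add, Prod.mk_add_mk, add_zero, zero_add]; rfl
  calc ‖x‖ ≤ ‖WithLp.toLp p (x.fst, (0 : β))‖ + ‖WithLp.toLp p ((0 : α), x.snd)‖ := by
        nth_rewrite 1 [hx]; exact norm_add_le _ _
    _ = ‖x.fst‖ + ‖x.snd‖ := by rw [WithLp.norm_toLp_fst, WithLp.norm_toLp_snd]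

theorem WithLp.isCompactOperator_of_norm_fst_le_of_snd_mem {p : ℝ≥0∞} {X F G : Type*}
    [SeminormedAddCommGroup X] [SeminormedAddCommGroup F] [ProperSpace F]
    [SeminormedAddCommGroup G] {T : X → WithLp p (F × G)} {B : ℝ} {K : Set G} (hK : IsCompact K)
    (hT : ∀ z, ‖z‖ ≤ 1 → ‖(T z).fst‖ ≤ B ∧ (T z).snd ∈ K) : IsCompactOperator T :=
  ⟨WithLp.toLp p '' (Metric.closedBall 0 B ×ˢ K),
    ((isCompact_closedBall 0 B).prod hK).image (WithLp.prod_continuous_toLp p F G),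
    mem_of_superset (Metric.closedBall_mem_nhds 0 one_pos) fun z hz =>
      have hTz := hT z (mem_closedBall_zero_iff.1 hz)
      ⟨((T z).fst, (T z).snd), ⟨mem_closedBall_zero_iff.2 hTz.1, hTz.2⟩, rfl⟩⟩

theorem tendsto_const_mul_sqrt_nhds_zero (C : ℝ) :
    Tendsto (fun t => C * √t) (𝓝 0) (𝓝 0) :=
  (continuous_const.mul Real.continuous_sqrt : Continuous fun t => C * √t).tendsto' 0 0 (by simp)

theorem continuous_of_continuity_modulus {α β : Type*} [PseudoMetricSpace α] [PseudoMetricSpace β]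
    (b : ℝ → ℝ) (hb : Tendsto b (𝓝 0) (𝓝 0)) {f : α → β}
    (hf : ∀ x y, dist (f x) (f y) ≤ b (dist x y)) : Continuous f :=
  ((Metric.uniformEquicontinuous_of_continuity_modulus b hb (fun _ : Unit => f)
    fun x y _ => hf x y).uniformContinuous ()).continuous

section Interval

variable {E : Type*} [NormedAddCommGroup E] {a b s t : ℝ} {g : ℝ → E}

theorem MeasureTheory.MemLp.intervalIntegrable_of_le (hg : MemLp g 2 (volume.restrict (Icc a b)))
    (hs : a ≤ s) (hst : s ≤ t) (ht : t ≤ b) : IntervalIntegrable g volume s t :=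
  (IntegrableOn.mono_set (hg.integrable one_le_two)
    (uIcc_subset_Icc ⟨hs, hst.trans ht⟩ ⟨hs.trans hst, ht⟩)).intervalIntegrable

theorem MeasureTheory.MemLp.intervalIntegral_norm_le_sqrt_mul_eLpNorm
    (hg : MemLp g 2 (volume.restrict (Icc a b))) (hs : a ≤ s) (hst : s ≤ t) (ht : t ≤ b) :
    ∫ r in s..t, ‖g r‖ ≤ √(t - s) * (eLpNorm g 2 (volume.restrict (Icc a b))).toReal := by
  have hrestrict : volume.restrict (Ioc s t) = (volume.restrict (Icc a b)).restrict (Ioc s t) := by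
    rw [Measure.restrict_restrict measurableSet_Ioc,
      inter_eq_self_of_subset_left (Ioc_subset_Icc_self.trans (Icc_subset_Icc hs ht))]
  have hg' : MemLp g 2 (volume.restrict (Ioc s t)) := hrestrict ▸ hg.restrict _
  have hmono : (eLpNorm g 2 (volume.restrict (Ioc s t))).toReal
      ≤ (eLpNorm g 2 (volume.restrict (Icc a b))).toReal :=
    ENNReal.toReal_mono hg.2.ne (hrestrict ▸ eLpNorm_mono_measure _ Measure.restrict_le_self)
  have hvol : (volume.restrict (Ioc s t)).real univ = t - s := by
    rw [measureReal_restrict_apply_univ, Real.volume_real_Ioc_of_le hst]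
  rw [intervalIntegral.integral_of_le hst]
  calc ∫ r in Ioc s t, ‖g r‖ ≤ √(t - s) * (eLpNorm g 2 (volume.restrict (Ioc s t))).toReal := by
        simpa only [hvol] using integral_norm_le_sqrt_measureReal_mul_eLpNorm _ hg'
    _ ≤ _ := by gcongr

theorem MeasureTheory.MemLp.norm_intervalIntegral_smul_le [NormedSpace ℝ E]
    (hg : MemLp g 2 (volume.restrict (Icc a b))) (hs : a ≤ s) (hst : s ≤ t) (ht : t ≤ b)
    {w : ℝ → ℝ} {c : ℝ} (hc : 0 ≤ c) (hw : ∀ r ∈ Ioc s t, |w r| ≤ c) :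
    ‖∫ r in s..t, w r • g r‖ ≤ c * √(t - s) * (eLpNorm g 2 (volume.restrict (Icc a b))).toReal := by
  calc ‖∫ r in s..t, w r • g r‖ ≤ ∫ r in s..t, c * ‖g r‖ :=
        intervalIntegral.norm_integral_le_of_norm_le hst
          (ae_of_all _ fun r hr => by rw [norm_smul, Real.norm_eq_abs]; gcongr; exact hw r hr)
          ((hg.intervalIntegrable_of_le hs hst ht).norm.const_mul c)
    _ ≤ c * (√(t - s) * (eLpNorm g 2 (volume.restrict (Icc a b))).toReal) := by
        rw [intervalIntegral.integral_const_mul]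
        gcongr
        exact hg.intervalIntegral_norm_le_sqrt_mul_eLpNorm hs hst ht
    _ = _ := by ring

theorem MeasureTheory.MemLp.norm_setIntegral_exp_mul_smul_le [NormedSpace ℝ E] {μ : ℝ}
    (hg : MemLp g 2 (volume.restrict (Icc a b))) (hμ : 0 ≤ μ) (hab : a ≤ b) (hb : b ≤ 0) :
    ‖∫ r in Icc a b, Real.exp (μ * r) • g r‖
      ≤ √(b - a) * (eLpNorm g 2 (volume.restrict (Icc a b))).toReal := by
  rw [integral_Icc_eq_integral_Ioc, ← intervalIntegral.integral_of_le hab, ← one_mul √(b - a)]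
  exact hg.norm_intervalIntegral_smul_le le_rfl hab le_rfl zero_le_one fun r hr => by
    rw [abs_of_pos (Real.exp_pos _)]
    exact Real.exp_le_one_iff.2 (by nlinarith [hr.2])

theorem norm_fst_add_integral_exp_smul_snd_le [NormedSpace ℝ E] {q : ℝ≥0∞} [Fact (1 ≤ q)] {μ : ℝ}
    (hμ : 0 ≤ μ) (hab : a ≤ b) (hb : b ≤ 0)
    (z : WithLp q (E × Lp E 2 (volume.restrict (Icc a b)))) :
    ‖z.fst + ∫ r in Icc a b, Real.exp (μ * r) • z.snd r‖ ≤ (1 + √(b - a)) * ‖z‖ := by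
  have h := (Lp.memLp z.snd).norm_setIntegral_exp_mul_smul_le hμ hab hb
  rw [← Lp.norm_def] at h
  calc _ ≤ ‖z.fst‖ + √(b - a) * ‖z.snd‖ := (norm_add_le _ _).trans (by gcongr)
    _ ≤ ‖z‖ + √(b - a) * ‖z‖ := by
        gcongr
        exacts [WithLp.norm_fst_le (x := z), WithLp.norm_snd_le (x := z)]
    _ = (1 + √(b - a)) * ‖z‖ := by ring

end Interval

theorem abs_exp_neg_mul_sub_exp_neg_mul_le {μ r η ξ : ℝ} (hμ : 0 ≤ μ) (hr : r ≤ η) (hη : η ≤ ξ) :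
    |Real.exp (-μ * (ξ - r)) - Real.exp (-μ * (η - r))| ≤ μ * (ξ - η) := by
  have hsplit : Real.exp (-μ * (ξ - r)) = Real.exp (-μ * (η - r)) * Real.exp (-(μ * (ξ - η))) := by
    rw [← Real.exp_add]; ring_nf
  have hA : Real.exp (-μ * (η - r)) ≤ 1 := Real.exp_le_one_iff.2 (by nlinarith)
  have hB : Real.exp (-(μ * (ξ - η))) ≤ 1 := Real.exp_le_one_iff.2 (by nlinarith)
  rw [hsplit, ← mul_sub_one, abs_mul, abs_of_pos (Real.exp_pos _), abs_sub_comm,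
    abs_of_nonneg (sub_nonneg.2 hB)]
  calc _ ≤ 1 * (μ * (ξ - η)) := mul_le_mul hA
        (by linarith [Real.one_sub_le_exp_neg (μ * (ξ - η))]) (sub_nonneg.2 hB) zero_le_one
    _ = μ * (ξ - η) := one_mul _

section Volterra

variable {E : Type*} [NormedAddCommGroup E] [NormedSpace ℝ E] {μ a b : ℝ} {g : ℝ → E}

/-- `u = expVolterra μ a g` solves `u' = -μ u + g`, `u a = 0`. -/
def expVolterra (μ a : ℝ) (g : ℝ → E) (ξ : ℝ) : E :=
  ∫ r in a..ξ, Real.exp (-μ * (ξ - r)) • g r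

theorem norm_expVolterra_sub_le (hμ : 0 ≤ μ) (hg : MemLp g 2 (volume.restrict (Icc a b)))
    {ξ η : ℝ} (hη : a ≤ η) (hηξ : η ≤ ξ) (hξ : ξ ≤ b) :
    ‖expVolterra μ a g ξ - expVolterra μ a g η‖
      ≤ (1 + μ * (b - a)) * (eLpNorm g 2 (volume.restrict (Icc a b))).toReal * √(ξ - η) := by
  set N := (eLpNorm g 2 (volume.restrict (Icc a b))).toReal
  have hN : 0 ≤ N := ENNReal.toReal_nonneg
  have hint : ∀ ζ s t, a ≤ s → s ≤ t → t ≤ b →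
      IntervalIntegrable (fun r => Real.exp (-μ * (ζ - r)) • g r) volume s t :=
    fun ζ s t hs hst ht => (hg.intervalIntegrable_of_le hs hst ht).continuousOn_smul
      (by fun_prop : Continuous fun r => Real.exp (-μ * (ζ - r))).continuousOn
  have hsplit : expVolterra μ a g ξ - expVolterra μ a g η
      = (∫ r in a..η, (Real.exp (-μ * (ξ - r)) - Real.exp (-μ * (η - r))) • g r)
        + ∫ r in η..ξ, Real.exp (-μ * (ξ - r)) • g r := by
    simp only [expVolterra, sub_smul]
    rw [← intervalIntegral.integral_add_adjacent_intervals (hint ξ a η le_rfl hη (hηξ.trans hξ))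
        (hint ξ η ξ hη hηξ hξ),
      intervalIntegral.integral_sub (hint ξ a η le_rfl hη (hηξ.trans hξ))
        (hint η a η le_rfl hη (hηξ.trans hξ))]
    abel
  have hold : ‖∫ r in a..η, (Real.exp (-μ * (ξ - r)) - Real.exp (-μ * (η - r))) • g r‖
      ≤ μ * (ξ - η) * √(η - a) * N :=
    hg.norm_intervalIntegral_smul_le le_rfl hη (hηξ.trans hξ) (by nlinarith)
      fun r hr => abs_exp_neg_mul_sub_exp_neg_mul_le hμ hr.2 hηξ
  have hnew : ‖∫ r in η..ξ, Real.exp (-μ * (ξ - r)) • g r‖ ≤ 1 * √(ξ - η) * N :=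
    hg.norm_intervalIntegral_smul_le hη hηξ hξ zero_le_one fun r hr => by
      rw [abs_of_pos (Real.exp_pos _)]
      exact Real.exp_le_one_iff.2 (by nlinarith [hr.2])
  have hsqrt : (ξ - η) * √(η - a) ≤ (b - a) * √(ξ - η) := by
    have h₁ : √(ξ - η) ≤ √(b - a) := Real.sqrt_le_sqrt (by linarith)
    have h₂ : √(η - a) ≤ √(b - a) := Real.sqrt_le_sqrt (by linarith)
    calc (ξ - η) * √(η - a) = √(ξ - η) * √(η - a) * √(ξ - η) := by
          rw [mul_comm (√(ξ - η)), mul_assoc, Real.mul_self_sqrt (by linarith)]; ring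
      _ ≤ √(b - a) * √(b - a) * √(ξ - η) := by gcongr
      _ = (b - a) * √(ξ - η) := by rw [Real.mul_self_sqrt (by linarith)]
  calc ‖expVolterra μ a g ξ - expVolterra μ a g η‖
      ≤ μ * (ξ - η) * √(η - a) * N + 1 * √(ξ - η) * N := hsplit ▸ (norm_add_le _ _).trans
        (add_le_add hold hnew)
    _ ≤ μ * ((b - a) * √(ξ - η)) * N + 1 * √(ξ - η) * N := by
        rw [mul_assoc μ]; gcongr
    _ = (1 + μ * (b - a)) * N * √(ξ - η) := by ring

theorem dist_expVolterra_le (hμ : 0 ≤ μ) (hg : MemLp g 2 (volume.restrict (Icc a b)))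
    {ξ η : ℝ} (hξ : ξ ∈ Icc a b) (hη : η ∈ Icc a b) :
    dist (expVolterra μ a g ξ) (expVolterra μ a g η)
      ≤ (1 + μ * (b - a)) * (eLpNorm g 2 (volume.restrict (Icc a b))).toReal * √(dist ξ η) := by
  rcases le_total η ξ with h | h
  · rw [dist_eq_norm, Real.dist_eq, abs_of_nonneg (sub_nonneg.2 h)]
    exact norm_expVolterra_sub_le hμ hg hη.1 h hξ.2
  · rw [dist_comm, dist_eq_norm, dist_comm, Real.dist_eq, abs_of_nonneg (sub_nonneg.2 h)]
    exact norm_expVolterra_sub_le hμ hg hξ.1 h hη.2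

theorem norm_expVolterra_le (hμ : 0 ≤ μ) (hg : MemLp g 2 (volume.restrict (Icc a b)))
    {ξ : ℝ} (hξ : ξ ∈ Icc a b) :
    ‖expVolterra μ a g ξ‖
      ≤ (1 + μ * (b - a)) * (eLpNorm g 2 (volume.restrict (Icc a b))).toReal * √(b - a) := by
  have h := norm_expVolterra_sub_le hμ hg le_rfl hξ.1 hξ.2
  rw [show expVolterra μ a g a = 0 from intervalIntegral.integral_same, sub_zero] at h
  have : 0 ≤ μ * (b - a) := mul_nonneg hμ (by linarith [hξ.1, hξ.2])
  exact h.trans (by gcongr; linarith [hξ.2])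

theorem Lp.norm_le_of_ae_eq_expVolterra (hμ : 0 ≤ μ) (hab : a ≤ b)
    (hg : MemLp g 2 (volume.restrict (Icc a b))) {f : Lp E 2 (volume.restrict (Icc a b))}
    (hf : f =ᵐ[volume.restrict (Icc a b)] expVolterra μ a g) :
    ‖f‖ ≤ (1 + μ * (b - a)) * (eLpNorm g 2 (volume.restrict (Icc a b))).toReal * (b - a) := by
  have hC : 0 ≤ (1 + μ * (b - a)) * (eLpNorm g 2 (volume.restrict (Icc a b))).toReal * √(b - a) :=
    mul_nonneg (mul_nonneg (by nlinarith) ENNReal.toReal_nonneg) (Real.sqrt_nonneg _)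
  have h := Lp.norm_le_of_ae_bound (f := f) hC (by
    filter_upwards [hf, ae_restrict_mem measurableSet_Icc] with ξ hfξ hξ
    exact hfξ ▸ norm_expVolterra_le hμ hg hξ)
  have hvol : (measureUnivNNReal (volume.restrict (Icc a b)) : ℝ) = b - a := by
    simp only [measureUnivNNReal, Measure.restrict_apply_univ, Real.volume_Icc,
      ENNReal.coe_toNNReal_eq_toReal, ENNReal.toReal_ofReal (sub_nonneg.2 hab)]
  rw [hvol, ENNReal.toReal_ofNat, ← one_div, ← Real.sqrt_eq_rpow] at h
  refine h.trans (le_of_eq ?_)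
  rw [mul_comm, mul_assoc, Real.mul_self_sqrt (sub_nonneg.2 hab)]

end Volterra

section Compactness

variable {E : Type*} [NormedAddCommGroup E] [NormedSpace ℝ E] [ProperSpace E] {a b : ℝ}

theorem exists_isCompact_forall_mem_Lp_of_dist_le_sqrt (hab : a ≤ b) (p : ℝ≥0∞) [Fact (1 ≤ p)]
    (M C : ℝ) :
    ∃ K : Set (Lp E p (volume.restrict (Icc a b))), IsCompact K ∧
      ∀ u : ℝ → E, (∀ x ∈ Icc a b, ‖u x‖ ≤ M) →
        (∀ x ∈ Icc a b, ∀ y ∈ Icc a b, dist (u x) (u y) ≤ C * √(dist x y)) →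
        ∀ f : Lp E p (volume.restrict (Icc a b)), f =ᵐ[volume.restrict (Icc a b)] u → f ∈ K := by
  let A : Set (Icc a b →ᵇ E) :=
    {v | (∀ x, v x ∈ Metric.closedBall 0 M) ∧ ∀ x y, dist (v x) (v y) ≤ C * √(dist x y)}
  have hA : IsCompact (closure A) :=
    BoundedContinuousFunction.arzela_ascoli _ (isCompact_closedBall 0 M) A (fun _ x hv => hv.1 x)
      (Metric.equicontinuous_of_continuity_modulus _ (tendsto_const_mul_sqrt_nhds_zero C) _
        fun x y v => v.2.2 x y)
  let extend : (Icc a b →ᵇ E) → Lp E p (volume.restrict (Icc a b)) := fun v =>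
    BoundedContinuousFunction.toLp p (volume.restrict (Icc a b)) ℝ
      (v.compContinuous ⟨projIcc a b hab, continuous_projIcc⟩)
  have hextend : Continuous extend :=
    (ContinuousLinearMap.continuous _).comp (BoundedContinuousFunction.continuous_compContinuous _)
  refine ⟨extend '' closure A, hA.image hextend, fun u hM hC f hf => ?_⟩
  have hu : Continuous fun x : Icc a b => u x :=
    continuous_of_continuity_modulus _ (tendsto_const_mul_sqrt_nhds_zero C)
      fun x y => hC x x.2 y y.2
  let v : Icc a b →ᵇ E :=
    BoundedContinuousFunction.ofNormedAddCommGroup _ hu M fun x => hM x x.2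
  refine ⟨v, subset_closure ⟨fun x => mem_closedBall_zero_iff.2 (hM x x.2),
    fun x y => hC x x.2 y y.2⟩, Lp.ext ?_⟩
  filter_upwards [BoundedContinuousFunction.coeFn_toLp p (volume.restrict (Icc a b)) ℝ
    (v.compContinuous ⟨projIcc a b hab, continuous_projIcc⟩), hf,
    ae_restrict_mem measurableSet_Icc] with x hextend_x hf_x hx
  rw [hextend_x, hf_x]
  simp [v, projIcc_of_mem hab hx]

theorem exists_isCompact_forall_expVolterra_mem {μ : ℝ} (hμ : 0 ≤ μ) (hab : a ≤ b)
    (p : ℝ≥0∞) [Fact (1 ≤ p)] (R : ℝ) :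
    ∃ K : Set (Lp E p (volume.restrict (Icc a b))), IsCompact K ∧
      ∀ g : ℝ → E, MemLp g 2 (volume.restrict (Icc a b)) →
        (eLpNorm g 2 (volume.restrict (Icc a b))).toReal ≤ R →
        ∀ f : Lp E p (volume.restrict (Icc a b)),
          f =ᵐ[volume.restrict (Icc a b)] expVolterra μ a g → f ∈ K := by
  obtain ⟨K, hK, hmem⟩ := exists_isCompact_forall_mem_Lp_of_dist_le_sqrt (E := E) hab p
    ((1 + μ * (b - a)) * R * √(b - a)) ((1 + μ * (b - a)) * R)
  have hμab : 0 ≤ 1 + μ * (b - a) := by nlinarith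
  refine ⟨K, hK, fun g hg hR f hf => hmem _ (fun x hx => ?_) (fun x hx y hy => ?_) f hf⟩
  · exact (norm_expVolterra_le hμ hg hx).trans (by gcongr)
  · exact (dist_expVolterra_le hμ hg hx hy).trans (by gcongr)

end Compactness

theorem Tmu_bounded_and_compact_general
    (n : ℕ) (d : ℝ) (hd : 0 < d)
    (a₀ : EuclideanSpace ℝ (Fin n) →L[ℝ] EuclideanSpace ℝ (Fin n))
    (a₁ : ℝ → EuclideanSpace ℝ (Fin n) →L[ℝ] EuclideanSpace ℝ (Fin n))
    (ha₁ : MemLp a₁ 2 (volume.restrict (Set.Icc (-d) 0)))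
    (μ₀ : ℝ)
    (hμ₀ : μ₀ = max (‖a₀‖ + 1) ((1/2) * ∫ ξ in Set.Icc (-d) 0, ‖a₁ ξ‖^2))
    (μ : ℝ) (hμ : μ₀ < μ)
    (T : XSp n d →ₗ[ℝ] XSp n d)
    -- first component of T_μ z
    (hT₁ : ∀ z : XSp n d,
      (WithLp.equiv 2 _ (T z)).1 = -(Ring.inverse
        (μ • (ContinuousLinearMap.id ℝ (EuclideanSpace ℝ (Fin n)))
          - a₀ - ∫ r in Set.Icc (-d) 0, Real.exp (μ * r) • a₁ r)
        ((WithLp.equiv 2 _ z).1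
          + ∫ r in Set.Icc (-d) 0, Real.exp (μ * r) • (WithLp.equiv 2 _ z).2 r)))
    -- second component of T_μ z (as an element of L², i.e. a.e.)
    (hT₂ : ∀ z : XSp n d,
      ∀ᵐ ξ ∂(volume.restrict (Set.Icc (-d) 0)),
        (WithLp.equiv 2 _ (T z)).2 ξ
          = ∫ r in (-d)..ξ, Real.exp (-μ * (ξ - r)) •
              (-((WithLp.equiv 2 _ z).2 r) + a₁ r (WithLp.equiv 2 _ z).1)) :
    (∃ K : ℝ, 0 ≤ K ∧ ∀ z : XSp n d, ‖T z‖ ≤ K * ‖z‖)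
    ∧ IsCompactOperator T := by
  have hμ_nonneg : 0 ≤ μ := by
    linarith [hμ₀ ▸ le_max_left (‖a₀‖ + 1) _, norm_nonneg a₀]
  have hlen : (0 : ℝ) - -d = d := by ring
  set R := Ring.inverse (μ • (ContinuousLinearMap.id ℝ (EuclideanSpace ℝ (Fin n)))
    - a₀ - ∫ r in Set.Icc (-d) 0, Real.exp (μ * r) • a₁ r)
  set Ca := (eLpNorm a₁ 2 (volume.restrict (Icc (-d) 0))).toReal
  have hg : ∀ z : XSp n d, MemLp (fun r => -(z.snd r) + a₁ r z.fst) 2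
      (volume.restrict (Icc (-d) 0)) :=
    fun z => (Lp.memLp z.snd).neg.add (ha₁.clm_apply z.fst)
  have hfst : ∀ z : XSp n d, ‖(T z).fst‖ ≤ ‖R‖ * (1 + √d) * ‖z‖ := fun z => by
    have h := norm_fst_add_integral_exp_smul_snd_le hμ_nonneg (by linarith : -d ≤ 0) le_rfl z
    rw [hlen] at h
    rw [show (T z).fst = _ from hT₁ z, norm_neg, mul_assoc]
    exact (R.le_opNorm _).trans (by gcongr; exact h)
  have hsnd : ∀ z : XSp n d, ‖(T z).snd‖ ≤ (1 + μ * d) * (1 + Ca) * d * ‖z‖ := fun z => by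
    have h := Lp.norm_le_of_ae_eq_expVolterra hμ_nonneg (by linarith) (hg z) (hT₂ z)
    rw [hlen] at h
    calc ‖(T z).snd‖ ≤ (1 + μ * d) * ((1 + Ca) * ‖z‖) * d :=
          h.trans (by gcongr; exact eLpNorm_neg_snd_add_clm_apply_fst_le ha₁ z)
      _ = (1 + μ * d) * (1 + Ca) * d * ‖z‖ := by ring
  refine ⟨⟨‖R‖ * (1 + √d) + (1 + μ * d) * (1 + Ca) * d, by positivity, fun z => ?_⟩, ?_⟩
  · calc ‖T z‖ ≤ ‖(T z).fst‖ + ‖(T z).snd‖ := WithLp.prod_norm_le_norm_fst_add_norm_snd _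
      _ ≤ ‖R‖ * (1 + √d) * ‖z‖ + (1 + μ * d) * (1 + Ca) * d * ‖z‖ := add_le_add (hfst z) (hsnd z)
      _ = _ := by ring
  obtain ⟨K, hK, hmem⟩ := exists_isCompact_forall_expVolterra_mem (E := EuclideanSpace ℝ (Fin n))
    hμ_nonneg (by linarith : -d ≤ 0) 2 (1 + Ca)
  refine WithLp.isCompactOperator_of_norm_fst_le_of_snd_mem hK fun z hz =>
    ⟨(hfst z).trans (mul_le_of_le_one_right (by positivity) hz),
      hmem _ (hg z) ((eLpNorm_neg_snd_add_clm_apply_fst_le ha₁ z).trans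
        (mul_le_of_le_one_right (by positivity) hz)) _ (hT₂ z)⟩

/-- For μ > μ₀, the operator T_μ (= (𝒜 − μI)⁻¹) is a bounded linear
operator on X and it is compact. -/
theorem Tmu_bounded_and_compact
    (n : ℕ) (hn : 1 ≤ n) (d : ℝ) (hd : 0 < d)
    (a₀ : EuclideanSpace ℝ (Fin n) →L[ℝ] EuclideanSpace ℝ (Fin n))
    (a₁ : ℝ → EuclideanSpace ℝ (Fin n) →L[ℝ] EuclideanSpace ℝ (Fin n))
    (ha₁ : MemLp a₁ 2 (volume.restrict (Set.Icc (-d) 0)))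
    (μ₀ : ℝ)
    (hμ₀ : μ₀ = max (‖a₀‖ + 1) ((1/2) * ∫ ξ in Set.Icc (-d) 0, ‖a₁ ξ‖^2))
    (μ : ℝ) (hμ : μ₀ < μ)
    (T : XSp n d →ₗ[ℝ] XSp n d)
    -- first component of T_μ z
    (hT₁ : ∀ z : XSp n d,
      (WithLp.equiv 2 _ (T z)).1 = -(Ring.inverse
        (μ • (ContinuousLinearMap.id ℝ (EuclideanSpace ℝ (Fin n)))
          - a₀ - ∫ r in Set.Icc (-d) 0, Real.exp (μ * r) • a₁ r)
        ((WithLp.equiv 2 _ z).1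
          + ∫ r in Set.Icc (-d) 0, Real.exp (μ * r) • (WithLp.equiv 2 _ z).2 r)))
    -- second component of T_μ z (as an element of L², i.e. a.e.)
    (hT₂ : ∀ z : XSp n d,
      ∀ᵐ ξ ∂(volume.restrict (Set.Icc (-d) 0)),
        (WithLp.equiv 2 _ (T z)).2 ξ
          = ∫ r in (-d)..ξ, Real.exp (-μ * (ξ - r)) •
              (-((WithLp.equiv 2 _ z).2 r) + a₁ r (WithLp.equiv 2 _ z).1)) :
    (∃ K : ℝ, 0 ≤ K ∧ ∀ z : XSp n d, ‖T z‖ ≤ K * ‖z‖)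
    ∧ IsCompactOperator T :=
  Tmu_bounded_and_compact_general n d hd a₀ a₁ ha₁ μ₀ hμ₀ μ hμ T hT₁ hT₂
end
end

section
/- For every R > 0 there exists a nondecreasing function ω̃_R : [0,∞) → [0,∞) with ω̃_R(s) → 0 as s → 0⁺ such that |l(x₀,u) − l(y₀,u)| ≤ ω̃_R(|T(x−y)|_X) for all x=(x₀,x₁), y=(y₀,y₁) ∈ X with |x|_X ≤ R and |y|_X ≤ R, and all u ∈ U. -/
/-! If `T` is injective, the range of `T†` is dense. Hence every coordinate functional of the
finite-dimensional component `z ↦ z₀` is approximated by functionals `⟪T† w, ·⟫ = ⟪w, T ·⟫`, and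
on bounded sets `‖T z‖ → 0` forces `z₀ → 0`. Composing with the modulus of `l` and taking the
supremum of `|l(x₀,u) − l(y₀,u)|` over `‖T(x − y)‖ ≤ s` gives the modulus `ω̃_R`. -/

open MeasureTheory RealInnerProductSpace
noncomputable section

open Filter Topology Metric Bornology InnerProductSpace

namespace ContinuousLinearMap

variable {𝕜 E F G : Type*} [RCLike 𝕜]
  [NormedAddCommGroup E] [InnerProductSpace 𝕜 E] [CompleteSpace E]
  [NormedAddCommGroup F] [InnerProductSpace 𝕜 F] [CompleteSpace F]
  [NormedAddCommGroup G] [InnerProductSpace 𝕜 G] [FiniteDimensional 𝕜 G]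
  {T : E →L[𝕜] F}

theorem denseRange_adjoint_of_injective (hT : Function.Injective T) : DenseRange (adjoint T) := by
  have hker : (adjoint T).rangeᗮ = ⊥ := by
    rw [orthogonal_range, adjoint_adjoint]
    exact LinearMap.ker_eq_bot.mpr hT
  change Dense (LinearMap.range (adjoint T : F →ₗ[𝕜] E) : Set E)
  exact Submodule.dense_iff_topologicalClosure_eq_top.mpr
    (Submodule.topologicalClosure_eq_top_iff.mpr hker)

theorem tendsto_inner_comap_inf_principal_of_isBounded (hT : Function.Injective T) (v : E)
    {s : Set E} (hs : IsBounded s) :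
    Tendsto (fun z => ⟪v, z⟫_𝕜) (comap T (𝓝 0) ⊓ 𝓟 s) (𝓝 0) := by
  rw [Metric.tendsto_nhds]
  intro ε hε
  obtain ⟨C, hC, hsC⟩ := hs.exists_pos_norm_le
  obtain ⟨w, hw⟩ := Metric.denseRange_iff.mp (denseRange_adjoint_of_injective hT) v
    (ε / (2 * C)) (by positivity)
  have hTw : ∀ᶠ z in comap T (𝓝 0), ‖⟪w, T z⟫_𝕜‖ < ε / 2 := by
    have : Tendsto (fun z => ⟪w, T z⟫_𝕜) (comap T (𝓝 0)) (𝓝 0) := by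
      simpa [Function.comp_def] using
        ((innerSL 𝕜 w).continuous.tendsto 0).comp (tendsto_comap (f := T))
    simpa using this.eventually (ball_mem_nhds 0 (half_pos hε))
  filter_upwards [inf_le_left (a := comap T (𝓝 0)) hTw, mem_inf_of_right (mem_principal_self s)]
    with z hz hzs
  rw [dist_zero_right]
  calc ‖⟪v, z⟫_𝕜‖ = ‖⟪v - adjoint T w, z⟫_𝕜 + ⟪w, T z⟫_𝕜‖ := by
        rw [inner_sub_left, adjoint_inner_left, sub_add_cancel]
    _ ≤ ‖v - adjoint T w‖ * ‖z‖ + ‖⟪w, T z⟫_𝕜‖ :=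
        (norm_add_le _ _).trans (by gcongr; exact norm_inner_le_norm _ _)
    _ ≤ ε / (2 * C) * C + ‖⟪w, T z⟫_𝕜‖ := by
        rw [← dist_eq_norm]
        gcongr
        exact hsC z hzs
    _ < ε / (2 * C) * C + ε / 2 := by gcongr
    _ = ε := by field_simp; ring

theorem tendsto_comap_inf_principal_of_finiteDimensional (hT : Function.Injective T)
    (P : E →L[𝕜] G) {s : Set E} (hs : IsBounded s) :
    Tendsto P (comap T (𝓝 0) ⊓ 𝓟 s) (𝓝 0) := by
  have := FiniteDimensional.complete 𝕜 G
  let b := stdOrthonormalBasis 𝕜 G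
  have hP : ⇑P = fun z => ∑ i, ⟪adjoint P (b i), z⟫_𝕜 • b i := by
    ext z
    simp_rw [adjoint_inner_left]
    exact (b.sum_repr' (P z)).symm
  rw [hP, show (0 : G) = ∑ i, (0 : 𝕜) • b i by simp]
  exact tendsto_finsetSum _ fun i _ =>
    (tendsto_inner_comap_inf_principal_of_isBounded hT _ hs).smul_const _

end ContinuousLinearMap

theorem exists_pos_forall_norm_le_of_tendsto {α E F : Type*} [SeminormedAddCommGroup E]
    [SeminormedAddCommGroup F] {T : α → E} {f : α → F} {s : Set α}
    (h : Tendsto f (comap T (𝓝 0) ⊓ 𝓟 s) (𝓝 0)) {ε : ℝ} (hε : 0 < ε) :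
    ∃ δ > 0, ∀ z ∈ s, ‖T z‖ ≤ δ → ‖f z‖ ≤ ε := by
  have := h.eventually (closedBall_mem_nhds 0 hε)
  rw [eventually_inf_principal, eventually_comap, Metric.eventually_nhds_iff] at this
  obtain ⟨δ, hδ, hball⟩ := this
  refine ⟨δ / 2, half_pos hδ, fun z hzs hTz => ?_⟩
  have hz : dist (T z) 0 < δ := by rw [dist_zero_right]; linarith
  simpa using hball hz z rfl hzs

theorem exists_modulus_of_forall_exists_le {α : Type*} (F g : α → ℝ) (hF : ∀ a, 0 ≤ F a)
    (hFbdd : BddAbove (Set.range F))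
    (hsmall : ∀ ε > 0, ∃ δ > 0, ∀ a, g a ≤ δ → F a ≤ ε) :
    ∃ ω : ℝ → ℝ, Monotone ω ∧ (∀ s, 0 ≤ ω s) ∧ Tendsto ω (𝓝[>] 0) (𝓝 0)
      ∧ ∀ a, F a ≤ ω (g a) := by
  have hbdd : ∀ s, BddAbove (F '' {a | g a ≤ s}) :=
    fun s => hFbdd.mono (Set.image_subset_range _ _)
  have hω0 : ∀ s, 0 ≤ sSup (F '' {a | g a ≤ s}) :=
    fun s => Real.sSup_nonneg (by rintro _ ⟨a, -, rfl⟩; exact hF a)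
  have hωle : ∀ s c, 0 ≤ c → (∀ a, g a ≤ s → F a ≤ c) → sSup (F '' {a | g a ≤ s}) ≤ c :=
    fun s c hc h => Real.sSup_le (by rintro _ ⟨a, ha, rfl⟩; exact h a ha) hc
  refine ⟨fun s => sSup (F '' {a | g a ≤ s}), fun s t hst => ?_, hω0, ?_,
    fun a => le_csSup (hbdd _) ⟨a, le_refl (g a), rfl⟩⟩
  · exact hωle s _ (hω0 t) fun a ha => le_csSup (hbdd t) ⟨a, ha.trans hst, rfl⟩
  · refine tendsto_order.2 ⟨fun c hc => Eventually.of_forall fun s => hc.trans_le (hω0 s),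
      fun c hc => ?_⟩
    obtain ⟨δ, hδ, hδF⟩ := hsmall (c / 2) (half_pos hc)
    filter_upwards [Ioo_mem_nhdsGT hδ] with s hs
    exact (hωle s _ (half_pos hc).le fun a ha => hδF a (ha.trans hs.2.le)).trans_lt
      (half_lt_self hc)

theorem running_cost_modulus_in_weak_norm_general
    (n : ℕ) (d : ℝ)
    (U : Type*)
    (l : EuclideanSpace ℝ (Fin n) → U → ℝ)
    (hl : ∀ R > (0:ℝ), ∃ ω : ℝ → ℝ, Monotone ω ∧ (∀ s, 0 ≤ ω s)
      ∧ Filter.Tendsto ω (nhdsWithin 0 (Set.Ioi 0)) (nhds 0)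
      ∧ ∀ (z z' : EuclideanSpace ℝ (Fin n)) (u : U),
          ‖z‖ ≤ R → ‖z'‖ ≤ R → |l z u - l z' u| ≤ ω ‖z - z'‖)
    (T : XSp n d →L[ℝ] XSp n d)
    (hTinj : Function.Injective T) :
    ∀ R > (0:ℝ), ∃ ω : ℝ → ℝ, Monotone ω ∧ (∀ s, 0 ≤ ω s)
      ∧ Filter.Tendsto ω (nhdsWithin 0 (Set.Ioi 0)) (nhds 0)
      ∧ ∀ (x y : XSp n d) (u : U), ‖x‖ ≤ R → ‖y‖ ≤ R →
          |l (WithLp.equiv 2 _ x).1 u - l (WithLp.equiv 2 _ y).1 u| ≤ ω ‖T (x - y)‖ := by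
  intro R hR
  obtain ⟨ω, hmono, -, htend, hmod⟩ := hl R hR
  have hfst : ∀ x : XSp n d, ‖x‖ ≤ R → ‖x.fst‖ ≤ R :=
    fun x hx => (WithLp.norm_fst_le _ x).trans hx
  have hdiff : ∀ x y : XSp n d, ‖x‖ ≤ R → ‖y‖ ≤ R → ‖x - y‖ ≤ 2 * R := fun x y hx hy =>
    (norm_sub_le x y).trans (by linarith)
  let S := {p : XSp n d × XSp n d × U // ‖p.1‖ ≤ R ∧ ‖p.2.1‖ ≤ R}
  let F : S → ℝ := fun p => |l p.1.1.fst p.1.2.2 - l p.1.2.1.fst p.1.2.2|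
  have hF : ∀ p : S, F p ≤ ω ‖p.1.1.fst - p.1.2.1.fst‖ := fun ⟨(x, y, u), hx, hy⟩ =>
    hmod x.fst y.fst u (hfst x hx) (hfst y hy)
  have hbdd : BddAbove (Set.range F) := by
    refine ⟨ω (2 * R), ?_⟩
    rintro _ ⟨⟨⟨x, y, u⟩, hx, hy⟩, rfl⟩
    exact (hF _).trans (hmono ((WithLp.norm_fst_le _ (x - y)).trans (hdiff x y hx hy)))
  have hsmall : ∀ ε > 0, ∃ δ > 0, ∀ p : S, ‖T (p.1.1 - p.1.2.1)‖ ≤ δ → F p ≤ ε := by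
    intro ε hε
    obtain ⟨η, hηε, hη⟩ := ((htend.eventually (gt_mem_nhds hε)).and self_mem_nhdsWithin).exists
    obtain ⟨δ, hδ, hδη⟩ := exists_pos_forall_norm_le_of_tendsto
      (T.tendsto_comap_inf_principal_of_finiteDimensional hTinj (WithLp.fstL 2 ℝ _ _)
        (isBounded_closedBall (x := 0) (r := 2 * R))) hη
    refine ⟨δ, hδ, fun ⟨(x, y, u), hx, hy⟩ hT => (hF _).trans ((hmono ?_).trans hηε.le)⟩
    exact hδη (x - y) (mem_closedBall_zero_iff.mpr (hdiff x y hx hy)) hT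
  obtain ⟨ω', hmono', hnonneg', htend', hle⟩ :=
    exists_modulus_of_forall_exists_le F _ (fun _ => abs_nonneg _) hbdd hsmall
  exact ⟨ω', hmono', hnonneg', htend', fun x y u hx hy => hle ⟨(x, y, u), hx, hy⟩⟩

/-- If l has a local modulus of continuity in its first variable, uniform in
u ∈ U, and T : X → X is an injective compact bounded linear operator, then for every
R > 0 there is a modulus ω̃_R with |l(x₀,u) − l(y₀,u)| ≤ ω̃_R(‖T(x−y)‖) whenever
‖x‖_X, ‖y‖_X ≤ R. -/
theorem running_cost_modulus_in_weak_norm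
    (n : ℕ) (hn : 1 ≤ n) (d : ℝ) (hd : 0 < d)
    (U : Type*) [Nonempty U]
    (l : EuclideanSpace ℝ (Fin n) → U → ℝ)
    (hl : ∀ R > (0:ℝ), ∃ ω : ℝ → ℝ, Monotone ω ∧ (∀ s, 0 ≤ ω s)
      ∧ Filter.Tendsto ω (nhdsWithin 0 (Set.Ioi 0)) (nhds 0)
      ∧ ∀ (z z' : EuclideanSpace ℝ (Fin n)) (u : U),
          ‖z‖ ≤ R → ‖z'‖ ≤ R → |l z u - l z' u| ≤ ω ‖z - z'‖)
    (T : XSp n d →L[ℝ] XSp n d)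
    (hTinj : Function.Injective T)
    (hTcompact : IsCompactOperator T) :
    ∀ R > (0:ℝ), ∃ ω : ℝ → ℝ, Monotone ω ∧ (∀ s, 0 ≤ ω s)
      ∧ Filter.Tendsto ω (nhdsWithin 0 (Set.Ioi 0)) (nhds 0)
      ∧ ∀ (x y : XSp n d) (u : U), ‖x‖ ≤ R → ‖y‖ ≤ R →
          |l (WithLp.equiv 2 _ x).1 u - l (WithLp.equiv 2 _ y).1 u| ≤ ω ‖T (x - y)‖ :=
  running_cost_modulus_in_weak_norm_general n d U l hl T hTinj
end
end

section
/- There is no constant C > 0 such that |x₀| ≤ C |T_μ x|_X for every x = (x₀,x₁) ∈ X with |x|_X ≤ 1. In fact, the vectors x^N := (1, −N·1_{[-1/N,0]}) ∈ X (for integers N > 1/d) satisfy x₀^N = 1 while |T_μ x^N|_X → 0 as N → ∞, and normalizing x^N shows the failure of the inequality on the unit ball. -/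
/-!
Put `t = μ / N`. The first component of `T_μ x^N` equals `-(N / μ²) (e^{-t} - 1 + t)`, which is
`O(1/N)`. The second component vanishes to the left of `-1/N`, and elsewhere it is bounded by
`‖x^N‖_{L¹} = 1` because the kernel `e^{-μ(ξ-r)}` is at most `1` for `r ≤ ξ`; so its squared
`L²` norm is at most `1/N`. Hence `|T_μ x^N|_X → 0`. Since `T_μ` is linear, rescaling `x^N` to the
unit sphere turns a bound `|x₀| ≤ C |T_μ x|_X` into `1 ≤ C |T_μ x^N|_X`, which fails for large `N`.
-/

open MeasureTheory Set Filter Topology Real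

noncomputable section

def tmuFst (d μ z₀ : ℝ) (z₁ : ℝ → ℝ) : ℝ :=
  -(μ⁻¹ * (z₀ + ∫ r in Icc (-d) 0, exp (μ * r) * z₁ r))

def tmuSnd (d μ : ℝ) (z₁ : ℝ → ℝ) (ξ : ℝ) : ℝ :=
  -(∫ r in (-d)..ξ, exp (-μ * (ξ - r)) * z₁ r)

def prodL2Norm (d z₀ : ℝ) (z₁ : ℝ → ℝ) : ℝ :=
  √(z₀ ^ 2 + ∫ ξ in Icc (-d) 0, z₁ ξ ^ 2)

def tmuNorm (d μ z₀ : ℝ) (z₁ : ℝ → ℝ) : ℝ :=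
  prodL2Norm d (tmuFst d μ z₀ z₁) (tmuSnd d μ z₁)

def spike (N : ℕ) : ℝ → ℝ :=
  Set.indicator (Icc (-(1 / (N : ℝ))) 0) (fun _ => -(N : ℝ))

section Homogeneity

variable (d μ c z₀ : ℝ) (z₁ : ℝ → ℝ)

theorem tmuFst_smul : tmuFst d μ (c * z₀) (c • z₁) = c * tmuFst d μ z₀ z₁ := by
  simp only [tmuFst, Pi.smul_apply, smul_eq_mul, mul_left_comm _ c, integral_const_mul]
  ring

theorem tmuSnd_smul : tmuSnd d μ (c • z₁) = c • tmuSnd d μ z₁ := by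
  ext ξ
  simp only [tmuSnd, Pi.smul_apply, smul_eq_mul, mul_left_comm _ c,
    intervalIntegral.integral_const_mul]
  ring

theorem prodL2Norm_smul : prodL2Norm d (c * z₀) (c • z₁) = |c| * prodL2Norm d z₀ z₁ := by
  simp only [prodL2Norm, Pi.smul_apply, smul_eq_mul, mul_pow, integral_const_mul, ← mul_add]
  rw [sqrt_mul (sq_nonneg c), sqrt_sq_eq_abs]

theorem tmuNorm_smul : tmuNorm d μ (c * z₀) (c • z₁) = |c| * tmuNorm d μ z₀ z₁ := by
  rw [tmuNorm, tmuFst_smul, tmuSnd_smul, prodL2Norm_smul, tmuNorm]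

end Homogeneity

theorem prodL2Norm_pos {d z₀ : ℝ} (z₁ : ℝ → ℝ) (hz₀ : z₀ ≠ 0) : 0 < prodL2Norm d z₀ z₁ :=
  sqrt_pos.2 (by positivity)

theorem prodL2Norm_le_sqrt {d z₀ a b : ℝ} {z₁ : ℝ → ℝ} (h₀ : |z₀| ≤ a)
    (h₁ : ∫ ξ in Icc (-d) 0, z₁ ξ ^ 2 ≤ b) : prodL2Norm d z₀ z₁ ≤ √(a ^ 2 + b) := by
  refine sqrt_le_sqrt (add_le_add ?_ h₁)
  rw [← sq_abs]
  exact pow_le_pow_left₀ (abs_nonneg _) h₀ 2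

theorem integral_exp_mul {μ : ℝ} (hμ : μ ≠ 0) (a b : ℝ) :
    ∫ r in a..b, exp (μ * r) = (exp (μ * b) - exp (μ * a)) / μ := by
  rw [intervalIntegral.integral_comp_mul_left (fun r => exp r) hμ, integral_exp, smul_eq_mul,
    inv_mul_eq_div]

theorem setIntegral_exp_mul_spike {d μ : ℝ} {N : ℕ} (hμ : μ ≠ 0) (hNd : 1 / (N : ℝ) ≤ d) :
    ∫ r in Icc (-d) 0, exp (μ * r) * spike N r = -N * (1 - exp (-(μ / N))) / μ := by
  have hN : 0 ≤ 1 / (N : ℝ) := by positivity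
  simp_rw [spike, ← indicator_mul_right (Icc _ _) (fun r => exp (μ * r))]
  rw [setIntegral_indicator measurableSet_Icc, Icc_inter_Icc, max_eq_right (by linarith),
    min_self, integral_mul_const, integral_Icc_eq_integral_Ioc,
    ← intervalIntegral.integral_of_le (by linarith), integral_exp_mul hμ,
    mul_zero, exp_zero, show μ * -(1 / (N : ℝ)) = -(μ / N) by ring]
  ring

theorem abs_tmuFst_one_spike_le {d μ : ℝ} {N : ℕ} (hμ : 0 < μ) (hμN : μ ≤ N)
    (hNd : 1 / (N : ℝ) ≤ d) : |tmuFst d μ 1 (spike N)| ≤ 1 / N := by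
  have hN : (0 : ℝ) < N := hμ.trans_le hμN
  have ht : |-(μ / N)| ≤ 1 := by
    rw [abs_neg, abs_of_pos (by positivity), div_le_one hN]; exact hμN
  have key : tmuFst d μ 1 (spike N) = -(N / μ ^ 2 * (exp (-(μ / N)) - 1 - -(μ / N))) := by
    rw [tmuFst, setIntegral_exp_mul_spike hμ.ne' hNd]
    field_simp
    ring
  rw [key, abs_neg, abs_mul, abs_of_pos (by positivity)]
  calc (N : ℝ) / μ ^ 2 * |exp (-(μ / N)) - 1 - -(μ / N)| ≤ N / μ ^ 2 * (-(μ / N)) ^ 2 := by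
        gcongr; exact abs_exp_sub_one_sub_id_le ht
    _ = 1 / (N : ℝ) := by field_simp

theorem abs_integral_exp_mul_le {μ a b : ℝ} {f : ℝ → ℝ} (hμ : 0 ≤ μ) (hab : a ≤ b)
    (hf : IntervalIntegrable f volume a b) :
    |∫ r in a..b, exp (-μ * (b - r)) * f r| ≤ ∫ r in a..b, |f r| := by
  rw [← norm_eq_abs]
  refine intervalIntegral.norm_integral_le_of_norm_le hab (ae_of_all _ fun r hr => ?_) hf.abs
  have hexp : exp (-μ * (b - r)) ≤ 1 := exp_le_one_iff.2 (by nlinarith [hr.2])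
  rw [norm_mul, norm_of_nonneg (exp_pos _).le, norm_eq_abs]
  exact mul_le_of_le_one_left (abs_nonneg _) hexp

theorem abs_spike (N : ℕ) :
    (fun r => |spike N r|) = Set.indicator (Icc (-(1 / (N : ℝ))) 0) (fun _ => (N : ℝ)) := by
  ext r
  simp only [spike, Set.indicator_apply]
  split_ifs <;> simp

theorem integrable_spike (N : ℕ) : Integrable (spike N) :=
  (integrable_indicator_iff measurableSet_Icc).2 (integrableOn_const (by simp))

theorem memLp_spike (N : ℕ) : MemLp (spike N) 2 :=
  memLp_indicator_const 2 measurableSet_Icc _ (Or.inr (by simp))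

theorem integral_abs_spike_le {N : ℕ} (hN : 0 < N) {a b : ℝ} (hab : a ≤ b) :
    ∫ r in a..b, |spike N r| ≤ 1 := by
  calc ∫ r in a..b, |spike N r| ≤ ∫ r, |spike N r| := by
        rw [intervalIntegral.integral_of_le hab]
        exact setIntegral_le_integral (integrable_spike N).abs (ae_of_all _ fun r => abs_nonneg _)
    _ = 1 := by
        rw [abs_spike, integral_indicator_const _ measurableSet_Icc,
          volume_real_Icc_of_le (neg_nonpos.2 (by positivity)), smul_eq_mul]
        field_simp
        ring

theorem tmuSnd_spike_of_lt {d μ ξ : ℝ} {N : ℕ} (hNd : 1 / (N : ℝ) < d) (hξ : ξ < -(1 / N)) :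
    tmuSnd d μ (spike N) ξ = 0 := by
  have hzero : EqOn (fun r => exp (-μ * (ξ - r)) * spike N r) (fun _ => 0) (uIcc (-d) ξ) := by
    intro r hr
    have hr' : r < -(1 / N) := hr.2.trans_lt (max_lt (by linarith) hξ)
    dsimp only
    rw [spike, indicator_of_notMem (fun h : r ∈ Icc _ _ => hr'.not_ge h.1), mul_zero]
  rw [tmuSnd, intervalIntegral.integral_congr hzero, intervalIntegral.integral_zero, neg_zero]

theorem abs_tmuSnd_spike_le_one {d μ ξ : ℝ} {N : ℕ} (hμ : 0 ≤ μ) (hN : 0 < N) (hξ : -d ≤ ξ) :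
    |tmuSnd d μ (spike N) ξ| ≤ 1 := by
  rw [tmuSnd, abs_neg]
  exact (abs_integral_exp_mul_le hμ hξ (integrable_spike N).intervalIntegrable).trans
    (integral_abs_spike_le hN hξ)

theorem setIntegral_sq_tmuSnd_spike_le {d μ : ℝ} {N : ℕ} (hμ : 0 ≤ μ) (hN : 0 < N)
    (hNd : 1 / (N : ℝ) < d) : ∫ ξ in Icc (-d) 0, tmuSnd d μ (spike N) ξ ^ 2 ≤ 1 / N := by
  set s := Icc (-(1 / (N : ℝ))) 0
  have hle : ∀ ξ ∈ Icc (-d) 0, tmuSnd d μ (spike N) ξ ^ 2 ≤ s.indicator 1 ξ := fun ξ hξ => by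
    rcases lt_or_ge ξ (-(1 / N)) with hlt | hge
    · rw [tmuSnd_spike_of_lt hNd hlt, sq, zero_mul]
      exact indicator_nonneg (fun _ _ => zero_le_one) _
    · rw [indicator_of_mem (show ξ ∈ s from ⟨hge, hξ.2⟩), Pi.one_apply,
        sq_le_one_iff_abs_le_one]
      exact abs_tmuSnd_spike_le_one hμ hN hξ.1
  have hint : Integrable (s.indicator (1 : ℝ → ℝ)) :=
    (integrable_indicator_iff measurableSet_Icc).2 (integrableOn_const (by simp))
  calc ∫ ξ in Icc (-d) 0, tmuSnd d μ (spike N) ξ ^ 2 ≤ ∫ ξ in Icc (-d) 0, s.indicator 1 ξ :=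
        integral_mono_of_nonneg (ae_of_all _ fun ξ => sq_nonneg _) hint.integrableOn
          ((ae_restrict_iff' measurableSet_Icc).2 (ae_of_all _ hle))
    _ = 1 / N := by
        rw [setIntegral_indicator measurableSet_Icc, Icc_inter_Icc, max_eq_right (by linarith),
          min_self, Pi.one_def, setIntegral_const,
          volume_real_Icc_of_le (neg_nonpos.2 (by positivity))]
        simp

theorem tendsto_tmuNorm_one_spike {d μ : ℝ} (hd : 0 < d) (hμ : 0 < μ) :
    Tendsto (fun N : ℕ => tmuNorm d μ 1 (spike N)) atTop (𝓝 0) := by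
  have hbound : Tendsto (fun N : ℕ => √((1 / (N : ℝ)) ^ 2 + 1 / N)) atTop (𝓝 0) := by
    simpa using ((tendsto_one_div_atTop_nhds_zero_nat.pow 2).add
      tendsto_one_div_atTop_nhds_zero_nat).sqrt
  have hlarge : ∀ᶠ N : ℕ in atTop, μ ≤ N ∧ 1 / (N : ℝ) < d :=
    (tendsto_natCast_atTop_atTop.eventually_ge_atTop μ).and
      (tendsto_one_div_atTop_nhds_zero_nat.eventually_lt_const hd)
  refine tendsto_of_tendsto_of_tendsto_of_le_of_le' tendsto_const_nhds hbound
    (Eventually.of_forall fun N => sqrt_nonneg _) ?_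
  filter_upwards [hlarge] with N ⟨hμN, hNd⟩
  have hN : 0 < N := by exact_mod_cast hμ.trans_le hμN
  exact prodL2Norm_le_sqrt (abs_tmuFst_one_spike_le hμ hμN hNd.le)
    (setIntegral_sq_tmuSnd_spike_le hμ.le hN hNd)

theorem not_exists_bound_of_tendsto_tmuNorm {d μ : ℝ} {x : ℕ → ℝ → ℝ}
    (hx : ∀ N, MemLp (x N) 2 (volume.restrict (Icc (-d) 0)))
    (hT : Tendsto (fun N => tmuNorm d μ 1 (x N)) atTop (𝓝 0)) :
    ¬ ∃ C > (0 : ℝ), ∀ (z₀ : ℝ) (z₁ : ℝ → ℝ), MemLp z₁ 2 (volume.restrict (Icc (-d) 0)) →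
      prodL2Norm d z₀ z₁ ≤ 1 → |z₀| ≤ C * tmuNorm d μ z₀ z₁ := by
  rintro ⟨C, -, hC⟩
  have hsmall : ∀ᶠ N in atTop, C * tmuNorm d μ 1 (x N) < 1 :=
    (mul_zero C ▸ hT.const_mul C).eventually_lt_const one_pos
  obtain ⟨N, hN⟩ := hsmall.exists
  set c := (prodL2Norm d 1 (x N))⁻¹
  have hc : 0 < c := inv_pos.2 (prodL2Norm_pos _ one_ne_zero)
  have hunit : prodL2Norm d (c * 1) (c • x N) = 1 := by
    rw [prodL2Norm_smul, abs_of_pos hc, inv_mul_cancel₀ (prodL2Norm_pos _ one_ne_zero).ne']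
  have := hC (c * 1) (c • x N) ((hx N).const_smul c) hunit.le
  rw [tmuNorm_smul, mul_one, abs_of_pos hc, mul_left_comm] at this
  linarith [mul_lt_mul_of_pos_left hN hc]

/-- (scalar case n = 1, a₀ = 0, a₁ = 0, μ > 1) There is no constant C > 0
with |x₀| ≤ C|T_μ x|_X for all x = (x₀,x₁) in the unit ball of X = ℝ × L²([-d,0];ℝ);
indeed the vectors x^N = (1, −N·1_{[-1/N,0]}) satisfy x₀^N = 1 while |T_μ x^N|_X → 0. -/
theorem no_first_component_bound_by_Tmu
    (d : ℝ) (hd : 0 < d) (μ : ℝ) (hμ : 1 < μ)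
    -- first component of T_μ z
    (Tfst : ℝ → (ℝ → ℝ) → ℝ)
    (hTfst : ∀ z₀ z₁, Tfst z₀ z₁
      = -(μ⁻¹ * (z₀ + ∫ r in Set.Icc (-d) 0, Real.exp (μ * r) * z₁ r)))
    -- second component of T_μ z
    (Tsnd : (ℝ → ℝ) → ℝ → ℝ)
    (hTsnd : ∀ z₁ ξ, Tsnd z₁ ξ = -(∫ r in (-d)..ξ, Real.exp (-μ * (ξ - r)) * z₁ r))
    -- |T_μ z|_X
    (normT : ℝ → (ℝ → ℝ) → ℝ)
    (hnormT : ∀ z₀ z₁, normT z₀ z₁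
      = Real.sqrt ((Tfst z₀ z₁)^2 + ∫ ξ in Set.Icc (-d) 0, (Tsnd z₁ ξ)^2))
    -- the vectors x^N = (1, −N·1_{[-1/N,0]})
    (xN : ℕ → ℝ → ℝ)
    (hxN : ∀ (N : ℕ) (ξ : ℝ),
      xN N ξ = Set.indicator (Set.Icc (-(1/(N:ℝ))) 0) (fun _ => -(N:ℝ)) ξ) :
    -- the inequality |x₀| ≤ C|T_μ x|_X fails on the unit ball of X
    (¬ ∃ C > (0:ℝ), ∀ (z₀ : ℝ) (z₁ : ℝ → ℝ),
        MemLp z₁ 2 (volume.restrict (Set.Icc (-d) 0)) →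
        Real.sqrt (z₀^2 + ∫ ξ in Set.Icc (-d) 0, (z₁ ξ)^2) ≤ 1 →
        |z₀| ≤ C * normT z₀ z₁)
    -- |T_μ x^N|_X → 0 while the first component of x^N is 1
    ∧ Filter.Tendsto (fun N : ℕ => normT 1 (xN N)) Filter.atTop (nhds 0) := by
  obtain rfl : Tfst = tmuFst d μ := funext₂ hTfst
  obtain rfl : Tsnd = tmuSnd d μ := funext₂ hTsnd
  obtain rfl : normT = tmuNorm d μ := funext₂ hnormT
  obtain rfl : xN = spike := funext₂ hxN
  have htend := tendsto_tmuNorm_one_spike hd (zero_lt_one.trans hμ)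
  exact ⟨not_exists_bound_of_tendsto_tmuNorm (fun N => (memLp_spike N).restrict _) htend, htend⟩
end
end
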